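/- arXiv:math/0512606 — 5 statements merged into one kernel-verified Lean document; each statement's English description precedes it below -/
import Mathlib

section
/- Let f₁,…,f_k : ℍ → ℂ be linearly independent functions, each of the form f_i(τ) = e^{2πi h_i τ} g_i(e^{2πiτ}) with h_i ∈ ℚ and g_i holomorphic on the open unit disk. Then the span V of f₁,…,f_k admits a basis f̄₁,…,f̄_k with f̄_i(τ) = e^{2πi h̄_i τ} ḡ_i(e^{2πiτ}), where each ḡ_i is holomorphic on the open unit disk with ḡ_i(0) ≠ 0 and the rational numbers satisfy h̄₁ < h̄₂ < ⋯ < h̄_k; the numbers h̄₁,…,h̄_k are uniquely determined by V; and the Wronskian W_{(q d/dq)}(f̄₁,…,f̄_k) equals e^{2πi(h̄₁+⋯+h̄_k)τ} u(e^{2πiτ}) with u holomorphic on the open unit disk and u(0) equal, up to sign, to the nonzero Vandermonde determinant ∏_{i<j}(h̄_j − h̄_i); in particular the order of vanishing at i∞ of the Wronskian is h̄₁+⋯+h̄_k. -/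
open Complex Finset

/-- The Ramanujan derivative `(q d/dq) f = (2πi)⁻¹ df/dτ`. -/
noncomputable def ramD : (ℂ → ℂ) → (ℂ → ℂ) :=
  fun f τ => (2 * (Real.pi : ℂ) * I)⁻¹ * deriv f τ

/-- The upper half-plane as a subset of `ℂ`. -/
def UHP : Set ℂ := {z : ℂ | 0 < z.im}

/-!
Write `q = e^{2πiτ}`. If `v = q^a G(q)` with `G(0) ≠ 0`, call `a` an exponent of the space `V`.
Functions with pairwise distinct exponents are linearly independent: after dividing by the
smallest power of `q`, letting `τ → i∞` isolates one leading coefficient. Hence `V` has finitely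
many exponents, and one function `q^a G_a(q)`, `G_a(0) = 1`, for each exponent spans `V`: any
`q^b G(q) ∈ V` is `q^{b+o} R(q)` with `R(0) ≠ 0`, `b + o` is an exponent, and subtracting
`R(0) q^{b+o} G_{b+o}(q)` leaves an element of `V` of the form `q^{b+o+1} D(q)`, so induction on the
number of exponents above `b` applies. The exponents are thus the `h̄ᵢ`, determined by `V`. Finally
`(q d/dq)(q^a G(q)) = q^a (a G + q G')(q)`, so the Wronskian is `q^{∑ h̄ᵢ}` times a holomorphic
determinant whose value at `q = 0` is the Vandermonde determinant of the `h̄ᵢ`.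
-/

open Metric Filter Topology Function

noncomputable def nome (τ : ℂ) : ℂ := exp (2 * (Real.pi : ℂ) * I * τ)

noncomputable def nomePow (a : ℚ) (τ : ℂ) : ℂ := exp (2 * (Real.pi : ℂ) * I * (a : ℂ) * τ)

noncomputable def qPuiseux (a : ℚ) (g : ℂ → ℂ) (τ : ℂ) : ℂ := nomePow a τ * g (nome τ)

lemma isOpen_UHP : IsOpen UHP := isOpen_lt continuous_const continuous_im

lemma nome_eq_nomePow_one : nome = nomePow 1 := by
  ext τ
  simp [nome, nomePow]

lemma nomePow_add (a b : ℚ) (τ : ℂ) : nomePow (a + b) τ = nomePow a τ * nomePow b τ := by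
  rw [nomePow, nomePow, nomePow, ← exp_add]
  push_cast
  ring_nf

lemma nomePow_natCast (n : ℕ) (τ : ℂ) : nomePow n τ = nome τ ^ n := by
  rw [nomePow, nome, ← exp_nat_mul]
  push_cast
  ring_nf

lemma nomePow_sum {ι : Type*} (s : Finset ι) (a : ι → ℚ) (τ : ℂ) :
    nomePow (∑ i ∈ s, a i) τ = ∏ i ∈ s, nomePow (a i) τ := by
  simp only [nomePow, Rat.cast_sum, mul_sum, sum_mul, exp_sum]

lemma norm_nomePow (a : ℚ) (τ : ℂ) : ‖nomePow a τ‖ = Real.exp (-(2 * Real.pi * a * τ.im)) := by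
  simp [nomePow, norm_exp, mul_re, mul_im]

lemma nome_mem_ball {τ : ℂ} (hτ : τ ∈ UHP) : nome τ ∈ ball (0 : ℂ) 1 := by
  have : 0 < τ.im := hτ
  rw [mem_ball_zero_iff, nome_eq_nomePow_one, norm_nomePow, Real.exp_lt_one_iff]
  simp only [Rat.cast_one, mul_one, neg_lt_zero]
  positivity

lemma hasDerivAt_nomePow (a : ℚ) (τ : ℂ) :
    HasDerivAt (nomePow a) (2 * (Real.pi : ℂ) * I * a * nomePow a τ) τ := by
  have h : HasDerivAt (nomePow a) (nomePow a τ * (2 * (Real.pi : ℂ) * I * a * 1)) τ :=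
    ((hasDerivAt_id τ).const_mul _).cexp
  rwa [mul_one, mul_comm] at h

lemma tendsto_nomePow_ofReal_mul_I {a : ℚ} (ha : 0 < a) :
    Tendsto (fun t : ℝ => nomePow a (t * I)) atTop (𝓝 0) := by
  rw [tendsto_zero_iff_norm_tendsto_zero]
  simp only [norm_nomePow, mul_im, ofReal_re, I_im, mul_one, ofReal_im, I_re, mul_zero,
    add_zero]
  refine Real.tendsto_exp_atBot.comp (tendsto_neg_atTop_atBot.comp ?_)
  exact tendsto_id.const_mul_atTop (by positivity)

lemma qPuiseux_add (a b : ℚ) (g : ℂ → ℂ) (τ : ℂ) :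
    qPuiseux (a + b) g τ = nomePow a τ * qPuiseux b g τ := by
  rw [qPuiseux, qPuiseux, nomePow_add, mul_assoc]

lemma qPuiseux_add_natCast (a : ℚ) (n : ℕ) (g : ℂ → ℂ) :
    qPuiseux (a + n) g = qPuiseux a fun z => z ^ n * g z := by
  ext τ
  rw [qPuiseux_add, qPuiseux, qPuiseux, nomePow_natCast]

lemma qPuiseux_eq_qPuiseux_add_one_add_smul (a : ℚ) {R g : ℂ → ℂ} (hg : g 0 = 1) :
    qPuiseux a R =
      qPuiseux (a + 1) (dslope (fun z => R z - R 0 * g z) 0) + R 0 • qPuiseux a g := by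
  have hD : ∀ z, z ^ 1 * dslope (fun z => R z - R 0 * g z) 0 z = R z - R 0 * g z := fun z => by
    simpa [hg] using sub_smul_dslope (fun z => R z - R 0 * g z) 0 z
  have hshift := qPuiseux_add_natCast a 1 (dslope (fun z => R z - R 0 * g z) 0)
  rw [Nat.cast_one] at hshift
  ext τ
  simp only [hshift, hD, Pi.add_apply, Pi.smul_apply, smul_eq_mul, qPuiseux]
  ring

lemma domRestrict_qPuiseux_eq_zero {a : ℚ} {G : ℂ → ℂ} (hG : Set.EqOn G 0 (ball 0 1)) :
    UHP.domRestrict (qPuiseux a G) = 0 :=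
  funext fun τ => by simp [qPuiseux, hG (nome_mem_ball τ.2)]

lemma restrict_eq_domRestrict_qPuiseux {F : ℂ → ℂ} {a : ℚ} {G : ℂ → ℂ}
    (hF : ∀ τ ∈ UHP, F τ = qPuiseux a G τ) : UHP.restrict F = UHP.domRestrict (qPuiseux a G) :=
  Set.domRestrict_eq_domRestrict_iff.2 fun τ => hF τ

lemma tendsto_qPuiseux_ofReal_mul_I {a : ℚ} (ha : 0 ≤ a) {g : ℂ → ℂ} (hg : ContinuousAt g 0) :
    Tendsto (fun t : ℝ => qPuiseux a g (t * I)) atTop (𝓝 (if a = 0 then g 0 else 0)) := by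
  have hq : Tendsto (fun t : ℝ => g (nome (t * I))) atTop (𝓝 (g 0)) := by
    rw [nome_eq_nomePow_one]
    exact hg.tendsto.comp (tendsto_nomePow_ofReal_mul_I one_pos)
  rcases ha.eq_or_lt with rfl | ha
  · simpa [qPuiseux, nomePow] using hq
  · simpa [qPuiseux, ha.ne'] using (tendsto_nomePow_ofReal_mul_I ha).mul hq

lemma linearIndependent_domRestrict_qPuiseux {ι : Type*} {e : ι → ℚ} (he : Injective e)
    {g : ι → ℂ → ℂ} (hg : ∀ i, ContinuousAt (g i) 0) (hg0 : ∀ i, g i 0 ≠ 0) :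
    LinearIndependent ℂ fun i => UHP.domRestrict (qPuiseux (e i) (g i)) := by
  classical
  rw [linearIndependent_iff']
  intro s c hsum i hi
  by_contra hci
  set s' := s.filter (c · ≠ 0)
  obtain ⟨i₀, hi₀, hmin⟩ := s'.exists_min_image e ⟨i, mem_filter.2 ⟨hi, hci⟩⟩
  set F : ℝ → ℂ := fun t => ∑ j ∈ s', c j * qPuiseux (e j - e i₀) (g j) (t * I)
  have hlim : Tendsto F atTop (𝓝 (c i₀ * g i₀ 0)) := by
    have := tendsto_finsetSum s' fun j hj => (tendsto_qPuiseux_ofReal_mul_I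
      (sub_nonneg.2 (hmin j hj)) (hg j)).const_mul (c j)
    convert this using 2
    rw [sum_eq_single_of_mem i₀ hi₀ fun j _ hj => by simp [sub_eq_zero, he.ne hj]]
    simp
  have hF : F =ᶠ[atTop] fun _ => 0 := by
    filter_upwards [eventually_gt_atTop 0] with t ht
    have hsum_t := congrFun hsum ⟨t * I, by simpa [UHP] using ht⟩
    simp only [Finset.sum_apply, Pi.smul_apply, smul_eq_mul, Pi.zero_apply] at hsum_t
    simp only [F, sub_eq_neg_add, qPuiseux_add, mul_left_comm _ (nomePow _ _), ← mul_sum]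
    rw [sum_filter_of_ne fun j _ hj => left_ne_zero_of_mul hj]
    exact mul_eq_zero_of_right _ hsum_t
  have hc0 : c i₀ * g i₀ 0 = 0 := tendsto_nhds_unique hlim (tendsto_const_nhds.congr' hF.symm)
  exact mul_ne_zero (mem_filter.1 hi₀).2 (hg0 i₀) hc0

lemma DifferentiableOn.iterate_dslope {U : Set ℂ} (hU : IsOpen U) {c : ℂ} (hc : c ∈ U)
    {G : ℂ → ℂ} (hG : DifferentiableOn ℂ G U) (n : ℕ) :
    DifferentiableOn ℂ ((swap dslope c)^[n] G) U := by
  induction n with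
  | zero => exact hG
  | succ n ih =>
    rw [iterate_succ_apply']
    exact (differentiableOn_dslope (hU.mem_nhds hc)).2 ih

lemma DifferentiableOn.exists_eq_pow_mul {U : Set ℂ} (hU : IsOpen U) (hU' : IsPreconnected U)
    {c : ℂ} (hc : c ∈ U) {G : ℂ → ℂ} (hG : DifferentiableOn ℂ G U) (hG0 : ¬ Set.EqOn G 0 U) :
    ∃ (n : ℕ) (R : ℂ → ℂ), DifferentiableOn ℂ R U ∧ R c ≠ 0 ∧ ∀ z, G z = (z - c) ^ n * R z := by
  obtain ⟨p, hp⟩ := hG.analyticAt (hU.mem_nhds hc)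
  have hp0 : p ≠ 0 := by
    rintro rfl
    exact hG0 <| (hG.analyticOnNhd hU).eqOn_zero_of_preconnected_of_eventuallyEq_zero hU' hc
      (hp.locally_zero_iff.2 rfl)
  exact ⟨p.order, _, hG.iterate_dslope hU hc _, hp.iterate_dslope_fslope_ne_zero hp0,
    hp.eq_pow_order_mul_iterate_dslope⟩

def qSpan {ι : Type*} (e : ι → ℚ) (g : ι → ℂ → ℂ) : Submodule ℂ (UHP → ℂ) :=
  Submodule.span ℂ (Set.range fun i => UHP.domRestrict (qPuiseux (e i) (g i)))

def qExponents (V : Submodule ℂ (UHP → ℂ)) : Set ℚ :=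
  {a | ∃ G : ℂ → ℂ, DifferentiableOn ℂ G (ball 0 1) ∧ G 0 = 1 ∧
    UHP.domRestrict (qPuiseux a G) ∈ V}

lemma mem_qExponents {V : Submodule ℂ (UHP → ℂ)} {a : ℚ} {G : ℂ → ℂ}
    (hG : DifferentiableOn ℂ G (ball 0 1)) (hG0 : G 0 ≠ 0)
    (hGV : UHP.domRestrict (qPuiseux a G) ∈ V) : a ∈ qExponents V := by
  refine ⟨fun z => (G 0)⁻¹ * G z, hG.const_mul _, inv_mul_cancel₀ hG0, ?_⟩
  convert V.smul_mem (G 0)⁻¹ hGV using 1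
  ext τ
  simp only [Set.domRestrict_apply, Pi.smul_apply, smul_eq_mul, qPuiseux]
  ring

lemma qExponents_finite (V : Submodule ℂ (UHP → ℂ)) [FiniteDimensional ℂ V] :
    (qExponents V).Finite := by
  choose G hG hG1 hGV using fun a : qExponents V => a.2
  have hli := linearIndependent_domRestrict_qPuiseux Subtype.val_injective
    (fun a => (hG a).continuousOn.continuousAt (ball_mem_nhds 0 one_pos))
    (fun a => by simp [hG1 a])
  have hliV : LinearIndependent ℂ fun a : qExponents V => (⟨_, hGV a⟩ : V) :=
    LinearIndependent.of_comp V.subtype hli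
  exact Set.finite_coe_iff.1 hliV.finite

lemma domRestrict_qPuiseux_mem_qSpan {ι : Type*} [Fintype ι] {V : Submodule ℂ (UHP → ℂ)}
    {e : ι → ℚ} {g : ι → ℂ → ℂ} (hg : ∀ i, DifferentiableOn ℂ (g i) (ball 0 1))
    (hg1 : ∀ i, g i 0 = 1) (hgV : ∀ i, UHP.domRestrict (qPuiseux (e i) (g i)) ∈ V)
    (he : qExponents V ⊆ Set.range e) {a : ℚ} {G : ℂ → ℂ}
    (hG : DifferentiableOn ℂ G (ball 0 1)) (hGV : UHP.domRestrict (qPuiseux a G) ∈ V) :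
    UHP.domRestrict (qPuiseux a G) ∈ qSpan e g := by
  classical
  induction hn : #{i | a ≤ e i} using Nat.strong_induction_on generalizing a G with
  | _ n ih =>
  by_cases hG0 : Set.EqOn G 0 (ball 0 1)
  · rw [domRestrict_qPuiseux_eq_zero hG0]
    exact zero_mem _
  obtain ⟨o, R, hR, hR0, hGR⟩ := hG.exists_eq_pow_mul isOpen_ball
    (convex_ball 0 1).isPreconnected (mem_ball_self one_pos) hG0
  have hGR' : qPuiseux a G = qPuiseux (a + o) R := by
    rw [qPuiseux_add_natCast]
    exact congrArg _ (funext fun z => by rw [hGR, sub_zero])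
  obtain ⟨i, hi⟩ := he (mem_qExponents hR hR0 (hGR' ▸ hGV))
  set D := dslope (fun z => R z - R 0 * g i z) 0
  have hD : DifferentiableOn ℂ D (ball 0 1) :=
    (differentiableOn_dslope (ball_mem_nhds 0 one_pos)).2 (hR.sub ((hg i).const_mul _))
  have hsplit : UHP.domRestrict (qPuiseux a G) = UHP.domRestrict (qPuiseux (a + o + 1) D) +
      R 0 • UHP.domRestrict (qPuiseux (e i) (g i)) := by
    rw [hGR', hi, qPuiseux_eq_qPuiseux_add_one_add_smul _ (hg1 i)]
    rfl
  have hDV : UHP.domRestrict (qPuiseux (a + o + 1) D) ∈ V := by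
    simpa [hsplit] using sub_mem hGV (V.smul_mem (R 0) (hgV i))
  rw [hsplit]
  refine add_mem (ih _ ?_ hD hDV rfl) (Submodule.smul_mem _ _ (Submodule.subset_span ⟨i, rfl⟩))
  rw [← hn]
  refine card_lt_card ((ssubset_iff_of_subset fun j hj => ?_).2 ⟨i, ?_, ?_⟩)
  · simp only [mem_filter, mem_univ, true_and] at hj ⊢
    linarith [show (0 : ℚ) ≤ o from o.cast_nonneg]
  · simp [hi]
  · simp [hi]

theorem exists_strictMono_qSpan_eq {ι : Type*} [Fintype ι] {h : ι → ℚ} {g : ι → ℂ → ℂ}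
    (hg : ∀ i, DifferentiableOn ℂ (g i) (ball 0 1)) :
    ∃ (n : ℕ) (hb : Fin n → ℚ) (gb : Fin n → ℂ → ℂ), StrictMono hb ∧
      (∀ i, DifferentiableOn ℂ (gb i) (ball 0 1)) ∧ (∀ i, gb i 0 = 1) ∧
      qSpan hb gb = qSpan h g := by
  have : FiniteDimensional ℂ (qSpan h g) :=
    FiniteDimensional.span_of_finite ℂ (Set.finite_range _)
  have hfin := qExponents_finite (qSpan h g)
  set hb := hfin.toFinset.orderEmbOfFin rfl
  choose gb hgb hgb1 hgbV using
    fun i => hfin.mem_toFinset.1 (hfin.toFinset.orderEmbOfFin_mem rfl i)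
  have he : qExponents (qSpan h g) ⊆ Set.range hb := by
    rw [range_orderEmbOfFin, hfin.coe_toFinset]
  refine ⟨_, hb, gb, hb.strictMono, hgb, hgb1, le_antisymm ?_ ?_⟩
  · exact Submodule.span_le.2 <| Set.range_subset_iff.2 hgbV
  · exact Submodule.span_le.2 <| Set.range_subset_iff.2 fun i =>
      domRestrict_qPuiseux_mem_qSpan hgb hgb1 hgbV he (hg i) (Submodule.subset_span ⟨i, rfl⟩)

lemma mem_range_of_domRestrict_qPuiseux_mem_qSpan {ι : Type*} {e : ι → ℚ} (he : Injective e)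
    {g : ι → ℂ → ℂ} (hg : ∀ i, ContinuousAt (g i) 0) (hg0 : ∀ i, g i 0 ≠ 0) {a : ℚ}
    {G : ℂ → ℂ} (hG : ContinuousAt G 0) (hG0 : G 0 ≠ 0)
    (hmem : UHP.domRestrict (qPuiseux a G) ∈ qSpan e g) : a ∈ Set.range e := by
  by_contra ha
  have hinj : Injective fun o : Option ι => o.elim a e := by
    rintro (_ | i) (_ | j) hij
    · rfl
    · exact (ha ⟨j, hij.symm⟩).elim
    · exact (ha ⟨i, hij⟩).elim
    · exact congrArg some (he hij)
  exact (linearIndependent_option.1 (linearIndependent_domRestrict_qPuiseux hinj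
    (g := fun o => o.elim G g) (Option.rec hG hg) (Option.rec hG0 hg0))).2 hmem

lemma range_subset_of_qSpan_le {ι ι' : Type*} {e : ι → ℚ} {e' : ι' → ℚ} (he' : Injective e')
    {g : ι → ℂ → ℂ} {g' : ι' → ℂ → ℂ} (hg : ∀ i, ContinuousAt (g i) 0) (hg0 : ∀ i, g i 0 ≠ 0)
    (hg' : ∀ i, ContinuousAt (g' i) 0) (hg'0 : ∀ i, g' i 0 ≠ 0) (hle : qSpan e g ≤ qSpan e' g') :
    Set.range e ⊆ Set.range e' := by
  rintro _ ⟨i, rfl⟩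
  exact mem_range_of_domRestrict_qPuiseux_mem_qSpan he' hg' hg'0 (hg i) (hg0 i)
    (hle (Submodule.subset_span ⟨i, rfl⟩))

lemma StrictMono.eq_of_qSpan_eq {ι : Type*} [LinearOrder ι] [WellFoundedLT ι] {e e' : ι → ℚ}
    {g g' : ι → ℂ → ℂ} (he : StrictMono e) (he' : StrictMono e')
    (hg : ∀ i, ContinuousAt (g i) 0) (hg0 : ∀ i, g i 0 ≠ 0)
    (hg' : ∀ i, ContinuousAt (g' i) 0) (hg'0 : ∀ i, g' i 0 ≠ 0) (hspan : qSpan e g = qSpan e' g') :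
    e = e' :=
  (he.range_inj he').1 <| subset_antisymm
    (range_subset_of_qSpan_le he'.injective hg hg0 hg' hg'0 hspan.le)
    (range_subset_of_qSpan_le he.injective hg' hg'0 hg hg0 hspan.ge)

noncomputable def qTheta (a : ℚ) (g : ℂ → ℂ) (z : ℂ) : ℂ := a * g z + z * deriv g z

lemma DifferentiableOn.iterate_qTheta {U : Set ℂ} (hU : IsOpen U) {g : ℂ → ℂ}
    (hg : DifferentiableOn ℂ g U) (a : ℚ) (n : ℕ) :
    DifferentiableOn ℂ ((qTheta a)^[n] g) U := by
  induction n with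
  | zero => exact hg
  | succ n ih =>
    rw [iterate_succ_apply']
    exact (ih.const_mul _).add (differentiableOn_id.mul (ih.deriv hU))

lemma iterate_qTheta_apply_zero (a : ℚ) (g : ℂ → ℂ) (n : ℕ) :
    (qTheta a)^[n] g 0 = a ^ n * g 0 := by
  induction n with
  | zero => simp
  | succ n ih => rw [iterate_succ_apply', qTheta, ih, zero_mul, add_zero, pow_succ', mul_assoc]

lemma ramD_qPuiseux {a : ℚ} {g : ℂ → ℂ} (hg : DifferentiableOn ℂ g (ball 0 1)) {τ : ℂ}
    (hτ : τ ∈ UHP) : ramD (qPuiseux a g) τ = qPuiseux a (qTheta a g) τ := by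
  have hnome : HasDerivAt nome (2 * (Real.pi : ℂ) * I * nome τ) τ := by
    simpa [nome_eq_nomePow_one] using hasDerivAt_nomePow 1 τ
  have hgq : HasDerivAt g (deriv g (nome τ)) (nome τ) :=
    (hg.differentiableAt (isOpen_ball.mem_nhds (nome_mem_ball hτ))).hasDerivAt
  have hF : HasDerivAt (qPuiseux a g) _ τ := (hasDerivAt_nomePow a τ).mul (hgq.comp τ hnome)
  have hπ : (Real.pi : ℂ) ≠ 0 := ofReal_ne_zero.2 Real.pi_ne_zero
  rw [ramD, hF.deriv, qPuiseux, qTheta]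
  field_simp

lemma iterate_ramD_qPuiseux {a : ℚ} {g : ℂ → ℂ} (hg : DifferentiableOn ℂ g (ball 0 1))
    (n : ℕ) {τ : ℂ} (hτ : τ ∈ UHP) :
    ramD^[n] (qPuiseux a g) τ = qPuiseux a ((qTheta a)^[n] g) τ := by
  induction n generalizing τ with
  | zero => rfl
  | succ n ih =>
    have hev : ramD^[n] (qPuiseux a g) =ᶠ[𝓝 τ] qPuiseux a ((qTheta a)^[n] g) :=
      eventually_of_mem (isOpen_UHP.mem_nhds hτ) fun _ => ih
    rw [iterate_succ_apply', iterate_succ_apply',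
      ← ramD_qPuiseux (hg.iterate_qTheta isOpen_ball a n) hτ, ramD, ramD, hev.deriv_eq]

lemma det_iterate_ramD_qPuiseux {k : ℕ} (e : Fin k → ℚ) {g : Fin k → ℂ → ℂ}
    (hg : ∀ i, DifferentiableOn ℂ (g i) (ball 0 1)) {τ : ℂ} (hτ : τ ∈ UHP) :
    (Matrix.of fun i j : Fin k => ramD^[i] (qPuiseux (e j) (g j)) τ).det =
      nomePow (∑ i, e i) τ *
        (Matrix.of fun i j : Fin k => (qTheta (e j))^[i] (g j) (nome τ)).det := by
  simp only [iterate_ramD_qPuiseux (hg _) _ hτ, qPuiseux, nomePow_sum]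
  exact Matrix.det_mul_row (fun j => nomePow (e j) τ) _

lemma DifferentiableOn.matrix_det {𝕜 𝔸 n : Type*} [NontriviallyNormedField 𝕜]
    [NormedCommRing 𝔸] [NormedAlgebra 𝕜 𝔸] [Fintype n] [DecidableEq n] {M : 𝕜 → Matrix n n 𝔸}
    {s : Set 𝕜} (hM : ∀ i j, DifferentiableOn 𝕜 (fun z => M z i j) s) :
    DifferentiableOn 𝕜 (fun z => (M z).det) s := by
  simp only [Matrix.det_apply']
  exact .fun_sum fun σ _ => (DifferentiableOn.fun_finsetProd fun i _ => hM _ _).const_mul _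

lemma prod_filter_fst_lt_snd {α M : Type*} [Fintype α] [LinearOrder α] [LocallyFiniteOrderTop α]
    [CommMonoid M] (f : α → α → M) :
    ∏ p ∈ univ.filter (fun p : α × α => p.1 < p.2), f p.1 p.2 = ∏ i, ∏ j ∈ Ioi i, f i j := by
  rw [prod_filter, ← univ_product_univ, prod_product]
  refine prod_congr rfl fun i _ => ?_
  rw [← prod_filter, filter_lt_eq_Ioi]

lemma det_iterate_qTheta_apply_zero {k : ℕ} (e : Fin k → ℚ) {g : Fin k → ℂ → ℂ}
    (hg1 : ∀ i, g i 0 = 1) :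
    (Matrix.of fun i j : Fin k => (qTheta (e j))^[i] (g j) 0).det =
      ∏ p ∈ univ.filter (fun p : Fin k × Fin k => p.1 < p.2), ((e p.2 : ℂ) - e p.1) := by
  have hV : (Matrix.of fun i j : Fin k => (qTheta (e j))^[i] (g j) 0) =
      (Matrix.vandermonde fun j => (e j : ℂ)).transpose := by
    ext i j
    simp [iterate_qTheta_apply_zero, hg1]
  rw [hV, Matrix.det_transpose, Matrix.det_vandermonde]
  exact (prod_filter_fst_lt_snd fun i j => (e j : ℂ) - e i).symm

theorem stmt_0_general (k : ℕ)
    (f : Fin k → ℂ → ℂ) (h : Fin k → ℚ) (g : Fin k → ℂ → ℂ)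
    (hg : ∀ i, DifferentiableOn ℂ (g i) (Metric.ball 0 1))
    (hf : ∀ i, ∀ τ ∈ UHP, f i τ =
      Complex.exp (2 * (Real.pi : ℂ) * I * (h i : ℂ) * τ) *
        g i (Complex.exp (2 * (Real.pi : ℂ) * I * τ)))
    (hli : LinearIndependent ℂ fun i => UHP.restrict (f i)) :
    ∃ (fb : Fin k → ℂ → ℂ) (hb : Fin k → ℚ) (gb : Fin k → ℂ → ℂ),
      StrictMono hb ∧
      (∀ i, DifferentiableOn ℂ (gb i) (Metric.ball 0 1)) ∧
      (∀ i, gb i 0 ≠ 0) ∧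
      (∀ i, ∀ τ ∈ UHP, fb i τ =
        Complex.exp (2 * (Real.pi : ℂ) * I * (hb i : ℂ) * τ) *
          gb i (Complex.exp (2 * (Real.pi : ℂ) * I * τ))) ∧
      Submodule.span ℂ (Set.range fun i => UHP.restrict (fb i)) =
        Submodule.span ℂ (Set.range fun i => UHP.restrict (f i)) ∧
      (∀ (fb' : Fin k → ℂ → ℂ) (hb' : Fin k → ℚ) (gb' : Fin k → ℂ → ℂ),
        StrictMono hb' →
        (∀ i, DifferentiableOn ℂ (gb' i) (Metric.ball 0 1)) →
        (∀ i, gb' i 0 ≠ 0) →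
        (∀ i, ∀ τ ∈ UHP, fb' i τ =
          Complex.exp (2 * (Real.pi : ℂ) * I * (hb' i : ℂ) * τ) *
            gb' i (Complex.exp (2 * (Real.pi : ℂ) * I * τ))) →
        Submodule.span ℂ (Set.range fun i => UHP.restrict (fb' i)) =
          Submodule.span ℂ (Set.range fun i => UHP.restrict (f i)) →
        hb' = hb) ∧
      ∃ u : ℂ → ℂ,
        DifferentiableOn ℂ u (Metric.ball 0 1) ∧
        (u 0 = ∏ p ∈ Finset.univ.filter (fun p : Fin k × Fin k => p.1 < p.2),
            ((hb p.2 : ℂ) - (hb p.1 : ℂ)) ∨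
         u 0 = -∏ p ∈ Finset.univ.filter (fun p : Fin k × Fin k => p.1 < p.2),
            ((hb p.2 : ℂ) - (hb p.1 : ℂ))) ∧
        u 0 ≠ 0 ∧
        ∀ τ ∈ UHP,
          Matrix.det (Matrix.of fun i j : Fin k => (ramD^[(i : ℕ)] (fb j)) τ) =
            Complex.exp (2 * (Real.pi : ℂ) * I * ((∑ i, hb i : ℚ) : ℂ) * τ) *
              u (Complex.exp (2 * (Real.pi : ℂ) * I * τ)) := by
  simp only [fun i => restrict_eq_domRestrict_qPuiseux (hf i)] at hli ⊢
  obtain ⟨n, hb, gb, hmono, hgb, hgb1, hspan⟩ := exists_strictMono_qSpan_eq hg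
  have hgb0 : ∀ i, gb i 0 ≠ 0 := fun i => by simp [hgb1]
  have hgbc : ∀ i, ContinuousAt (gb i) 0 :=
    fun i => (hgb i).continuousOn.continuousAt (ball_mem_nhds 0 one_pos)
  obtain rfl : n = k := by
    have := finrank_span_eq_card
      (linearIndependent_domRestrict_qPuiseux hmono.injective hgbc hgb0)
    rwa [← qSpan, hspan, qSpan, finrank_span_eq_card hli, Fintype.card_fin, Fintype.card_fin,
      eq_comm] at this
  refine ⟨fun i => qPuiseux (hb i) (gb i), hb, gb, hmono, hgb, hgb0, fun _ _ _ => rfl, hspan,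
    fun fb' hb' gb' hmono' hgb' hgb0' hfb' hspan' => ?_, ?_⟩
  · simp only [fun i => restrict_eq_domRestrict_qPuiseux (hfb' i)] at hspan'
    exact hmono'.eq_of_qSpan_eq hmono
      (fun i => (hgb' i).continuousOn.continuousAt (ball_mem_nhds 0 one_pos)) hgb0' hgbc hgb0
      (hspan'.trans hspan.symm)
  · have hu0 := det_iterate_qTheta_apply_zero hb hgb1
    refine ⟨fun z => (Matrix.of fun i j : Fin n => (qTheta (hb j))^[i] (gb j) z).det,
      DifferentiableOn.matrix_det fun i j => (hgb j).iterate_qTheta isOpen_ball _ _,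
      Or.inl hu0, ?_, fun τ hτ => det_iterate_ramD_qPuiseux hb hgb hτ⟩
    refine ne_of_eq_of_ne hu0 (prod_ne_zero_iff.2 fun p hp => sub_ne_zero.2 ?_)
    exact_mod_cast (hmono (mem_filter.1 hp).2).ne'

/-- given linearly independent `f₁,…,f_k : ℍ → ℂ` of the form
`f_i(τ) = e^{2πi h_i τ} g_i(e^{2πiτ})` with `h_i ∈ ℚ` and `g_i` holomorphic on the
open unit disk, their span admits a basis `f̄_i(τ) = e^{2πi h̄_i τ} ḡ_i(e^{2πiτ})`
with `ḡ_i(0) ≠ 0` and `h̄₁ < ⋯ < h̄_k`; the `h̄_i` are uniquely determined; and the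
Wronskian `W_{(q d/dq)}(f̄₁,…,f̄_k)` equals `e^{2πi(∑h̄_i)τ} u(e^{2πiτ})` with `u`
holomorphic on the unit disk and `u(0) = ±∏_{i<j}(h̄_j − h̄_i) ≠ 0`; in particular
its order of vanishing at `i∞` is `∑ h̄_i`. -/
theorem stmt_0 (k : ℕ) (hk : 0 < k)
    (f : Fin k → ℂ → ℂ) (h : Fin k → ℚ) (g : Fin k → ℂ → ℂ)
    (hg : ∀ i, DifferentiableOn ℂ (g i) (Metric.ball 0 1))
    (hf : ∀ i, ∀ τ ∈ UHP, f i τ =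
      Complex.exp (2 * (Real.pi : ℂ) * I * (h i : ℂ) * τ) *
        g i (Complex.exp (2 * (Real.pi : ℂ) * I * τ)))
    (hli : LinearIndependent ℂ fun i => UHP.restrict (f i)) :
    ∃ (fb : Fin k → ℂ → ℂ) (hb : Fin k → ℚ) (gb : Fin k → ℂ → ℂ),
      StrictMono hb ∧
      (∀ i, DifferentiableOn ℂ (gb i) (Metric.ball 0 1)) ∧
      (∀ i, gb i 0 ≠ 0) ∧
      (∀ i, ∀ τ ∈ UHP, fb i τ =
        Complex.exp (2 * (Real.pi : ℂ) * I * (hb i : ℂ) * τ) *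
          gb i (Complex.exp (2 * (Real.pi : ℂ) * I * τ))) ∧
      Submodule.span ℂ (Set.range fun i => UHP.restrict (fb i)) =
        Submodule.span ℂ (Set.range fun i => UHP.restrict (f i)) ∧
      (∀ (fb' : Fin k → ℂ → ℂ) (hb' : Fin k → ℚ) (gb' : Fin k → ℂ → ℂ),
        StrictMono hb' →
        (∀ i, DifferentiableOn ℂ (gb' i) (Metric.ball 0 1)) →
        (∀ i, gb' i 0 ≠ 0) →
        (∀ i, ∀ τ ∈ UHP, fb' i τ =
          Complex.exp (2 * (Real.pi : ℂ) * I * (hb' i : ℂ) * τ) *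
            gb' i (Complex.exp (2 * (Real.pi : ℂ) * I * τ))) →
        Submodule.span ℂ (Set.range fun i => UHP.restrict (fb' i)) =
          Submodule.span ℂ (Set.range fun i => UHP.restrict (f i)) →
        hb' = hb) ∧
      ∃ u : ℂ → ℂ,
        DifferentiableOn ℂ u (Metric.ball 0 1) ∧
        (u 0 = ∏ p ∈ Finset.univ.filter (fun p : Fin k × Fin k => p.1 < p.2),
            ((hb p.2 : ℂ) - (hb p.1 : ℂ)) ∨
         u 0 = -∏ p ∈ Finset.univ.filter (fun p : Fin k × Fin k => p.1 < p.2),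
            ((hb p.2 : ℂ) - (hb p.1 : ℂ))) ∧
        u 0 ≠ 0 ∧
        ∀ τ ∈ UHP,
          Matrix.det (Matrix.of fun i j : Fin k => (ramD^[(i : ℕ)] (fb j)) τ) =
            Complex.exp (2 * (Real.pi : ℂ) * I * ((∑ i, hb i : ℚ) : ℂ) * τ) *
              u (Complex.exp (2 * (Real.pi : ℂ) * I * τ)) :=
  stmt_0_general k f h g hg hf hli
end

section
/- Let Ω ⊆ ℂ be a nonempty connected open set and let f₁, f₂ : Ω → ℂ be holomorphic functions that are linearly independent over ℂ. Then for every positive integer m, the m+1 functions f₁^i f₂^{m−i} (0 ≤ i ≤ m) are linearly independent over ℂ. -/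
/-! A relation `∑ cᵢ f₁ ^ i f₂ ^ (m - i) = 0`, divided by `f₂ ^ m`, says that the polynomial
`∑ cᵢ Xⁱ` vanishes at every value of `f₁ / f₂` on `{f₂ ≠ 0}`, so it suffices that `f₁ / f₂` takes
infinitely many values there. If it did not, the continuous function `f₁ / f₂` would be a constant
`r` on a disc, and by the identity theorem `f₁ = r f₂` on all of `Ω`. -/

theorem Transcendental.linearIndependent_pow {R A : Type*} [CommRing R] [Ring A] [Algebra R A]
    {x : A} (hx : Transcendental R x) : LinearIndependent R (fun i : ℕ => x ^ i) := by
  have := (Polynomial.basisMonomials R).linearIndependent.map' (Polynomial.aeval x).toLinearMap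
    (LinearMap.ker_eq_bot.mpr (transcendental_iff_injective.mp hx))
  simpa [Function.comp_def] using this

theorem transcendental_of_infinite_range {K β : Type*} [Field K] {u : β → K}
    (hu : (Set.range u).Infinite) : Transcendental K u := by
  refine transcendental_iff.mpr fun p hp => p.eq_zero_of_infinite_isRoot (hu.mono ?_)
  rintro _ ⟨x, rfl⟩
  simpa [Polynomial.aeval_def, Polynomial.eval₂_at_apply] using congrFun hp x

theorem linearIndependent_pow_mul_pow_sub {K α : Type*} [Field K] {f g : α → K}
    (hfg : ((fun x => f x / g x) '' {x | g x ≠ 0}).Infinite) (m : ℕ) :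
    LinearIndependent K (fun i : Fin (m + 1) => fun x => f x ^ (i : ℕ) * g x ^ (m - i)) := by
  set u : {x | g x ≠ 0} → K := fun x => f x / g x
  have hu_range : (Set.range u).Infinite := by rwa [Set.image_eq_range] at hfg
  have hu : LinearIndependent K (fun i : Fin (m + 1) => u ^ (i : ℕ)) :=
    (transcendental_of_infinite_range hu_range).linearIndependent_pow.comp _ Fin.val_injective
  let L : (α → K) →ₗ[K] ({x | g x ≠ 0} → K) :=
    LinearMap.mulLeft K (fun x => (g x ^ m)⁻¹) ∘ₗ LinearMap.funLeft K K Subtype.val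
  refine .of_comp L ?_
  convert hu using 1
  ext i ⟨x, hx : g x ≠ 0⟩
  simp only [L, u, LinearMap.coe_comp, Function.comp_apply, LinearMap.mulLeft_apply, Pi.mul_apply,
    LinearMap.funLeft_apply, Pi.pow_apply]
  rw [pow_sub₀ _ hx i.is_le, div_pow]
  field_simp

theorem infinite_image_div_of_linearIndependent {Ω : Set ℂ} (hΩo : IsOpen Ω)
    (hΩc : IsPreconnected Ω) {f g : ℂ → ℂ} (hf : DifferentiableOn ℂ f Ω)
    (hg : DifferentiableOn ℂ g Ω) (hli : LinearIndependent ℂ ![Ω.domRestrict f, Ω.domRestrict g]) :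
    ((fun z : Ω => f z / g z) '' {z | g z ≠ 0}).Infinite := by
  obtain ⟨z₀, hz₀Ω, hgz₀⟩ : ∃ z ∈ Ω, g z ≠ 0 := by
    simpa [funext_iff] using hli.ne_zero 1
  intro hfin
  obtain ⟨ε, hε, hball⟩ := Metric.isOpen_iff.mp
    (hg.continuousOn.isOpen_inter_preimage hΩo isOpen_compl_singleton) z₀ ⟨hz₀Ω, hgz₀⟩
  have hconst : ((fun z => f z / g z) '' Metric.ball z₀ ε).Subsingleton := by
    refine Set.not_nontrivial_iff.mp fun hnt => ?_
    refine ((convex_ball z₀ ε).isPreconnected.image _ ?_).infinite_of_nontrivial hnt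
      (hfin.subset ?_)
    · exact ((hf.continuousOn.mono Set.inter_subset_left).div
        (hg.continuousOn.mono Set.inter_subset_left) fun z hz => hz.2).mono hball
    · rintro _ ⟨z, hz, rfl⟩
      exact ⟨⟨z, (hball hz).1⟩, (hball hz).2, rfl⟩
  set r := f z₀ / g z₀
  have hlocal : f =ᶠ[nhds z₀] fun z => r * g z := by
    filter_upwards [Metric.ball_mem_nhds z₀ hε] with z hz
    have hz' : f z / g z = r := hconst ⟨z, hz, rfl⟩ ⟨z₀, Metric.mem_ball_self hε, rfl⟩
    rw [← hz', div_mul_cancel₀ _ (hball hz).2]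
  have hglobal : Set.EqOn f (fun z => r * g z) Ω :=
    (hf.analyticOnNhd hΩo).eqOn_of_preconnected_of_eventuallyEq
      (analyticOnNhd_const.mul (hg.analyticOnNhd hΩo)) hΩc hz₀Ω hlocal
  have := LinearIndependent.pair_iff.mp hli 1 (-r) (by
    ext z
    simp [hglobal z.2])
  exact one_ne_zero this.1

theorem stmt_2_general (Ω : Set ℂ) (hΩo : IsOpen Ω) (hΩc : IsConnected Ω)
    (f₁ f₂ : ℂ → ℂ) (hf₁ : DifferentiableOn ℂ f₁ Ω) (hf₂ : DifferentiableOn ℂ f₂ Ω)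
    (hli : LinearIndependent ℂ ![Ω.restrict f₁, Ω.restrict f₂])
    (m : ℕ) :
    LinearIndependent ℂ (fun i : Fin (m + 1) =>
      Ω.restrict (fun z => f₁ z ^ (i : ℕ) * f₂ z ^ (m - (i : ℕ)))) :=
  linearIndependent_pow_mul_pow_sub
    (infinite_image_div_of_linearIndependent hΩo hΩc.isPreconnected hf₁ hf₂ hli) m

/-- If `f₁, f₂` are holomorphic on a nonempty connected open set `Ω ⊆ ℂ`
and linearly independent over `ℂ` (as functions on `Ω`), then for every positive
integer `m` the `m+1` functions `f₁^i f₂^(m-i)` (`0 ≤ i ≤ m`) are linearly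
independent over `ℂ`. -/
theorem stmt_2 (Ω : Set ℂ) (hΩne : Ω.Nonempty) (hΩo : IsOpen Ω) (hΩc : IsConnected Ω)
    (f₁ f₂ : ℂ → ℂ) (hf₁ : DifferentiableOn ℂ f₁ Ω) (hf₂ : DifferentiableOn ℂ f₂ Ω)
    (hli : LinearIndependent ℂ ![Ω.restrict f₁, Ω.restrict f₂])
    (m : ℕ) (hm : 0 < m) :
    LinearIndependent ℂ (fun i : Fin (m + 1) =>
      Ω.restrict (fun z => f₁ z ^ (i : ℕ) * f₂ z ^ (m - (i : ℕ)))) :=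
  stmt_2_general Ω hΩo hΩc f₁ f₂ hf₁ hf₂ hli m
end

section
/- Let Ω ⊆ ℂ be an open set, c ∈ ℂ a fixed constant, and let D denote the differential operator Df = c·(df/dz) acting on holomorphic functions on Ω. Then for any holomorphic f₁, f₂ : Ω → ℂ and any positive integer m, the Wronskian determinant satisfies W_D(f₁^m, f₁^{m−1}f₂, …, f₁f₂^{m−1}, f₂^m) = (∏_{k=1}^m k!) · (f₁·Df₂ − f₂·Df₁)^{m(m+1)/2} identically on Ω. -/
/-!
Off the zeros of `f₁`, write the functions as `f₁^m · u^j` with `u = f₂ / f₁`. By the Leibniz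
rule the Wronskian matrix of `(φ g_j)` is a lower triangular matrix with diagonal `φ` times that
of `(g_j)`, so the common factor comes out as `(f₁^m)^(m+1)`. Expanding along the first column
`(1, 0, …, 0)`, `W(1, u, …, u^m) = W(u', 2 u u', …, m u^(m-1) u') = m! u'^m W(1, u, …, u^(m-1))`,
hence `W(1, u, …, u^m) = ∏ k! · u'^(m(m+1)/2)`, and `f₁² u' = f₁ f₂' - f₂ f₁'` gives the identity.
Both sides are continuous, so it extends over the isolated zeros of `f₁`; if `f₁` vanishes
near the point, both sides vanish. Finally `D^i = c^i d^i/dz^i` contributes `c^(m(m+1)/2)`.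
-/

/-- The differential operator `D f = c · df/dz`. With `c = (2πi)⁻¹` and `Ω = ℍ`
this is the Ramanujan derivative `q d/dq`, `q = e^{2πiτ}`. -/
noncomputable def Dop (c : ℂ) (f : ℂ → ℂ) : ℂ → ℂ := fun z => c * deriv f z

open Filter Topology Finset
open scoped Nat

theorem succ_mul_succ_add_one_div_two (m : ℕ) :
    (m + 1) * (m + 1 + 1) / 2 = m * (m + 1) / 2 + (m + 1) := by
  rw [show (m + 1) * (m + 1 + 1) = m * (m + 1) + (m + 1) * 2 by ring,
    Nat.add_mul_div_right _ _ two_pos]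

theorem prod_fin_pow_val {M : Type*} [CommMonoid M] (c : M) (m : ℕ) :
    ∏ i : Fin (m + 1), c ^ (i : ℕ) = c ^ (m * (m + 1) / 2) := by
  rw [prod_pow_eq_pow_sum, Fin.sum_univ_eq_sum_range (fun i => i), sum_range_id,
    Nat.add_sub_cancel, mul_comm]

section Wronskian

variable {𝕜 : Type*} [NontriviallyNormedField 𝕜]

noncomputable def wronskian {n : ℕ} (g : Fin n → 𝕜 → 𝕜) (z : 𝕜) : 𝕜 :=
  (Matrix.of fun i j : Fin n => iteratedDeriv i (g j) z).det

variable {n : ℕ} {g h : Fin n → 𝕜 → 𝕜} {z : 𝕜}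

theorem wronskian_congr_nhds (hgh : ∀ j, g j =ᶠ[𝓝 z] h j) : wronskian g z = wronskian h z := by
  simp only [wronskian, fun i j => (hgh j).iteratedDeriv_eq i]

theorem wronskian_eq_zero_of_eventuallyEq_zero (j : Fin n) (hj : g j =ᶠ[𝓝 z] 0) :
    wronskian g z = 0 :=
  Matrix.det_eq_zero_of_column_eq_zero j fun i => by
    simp [hj.iteratedDeriv_eq]

theorem wronskian_const_mul (a : Fin n → 𝕜) (g : Fin n → 𝕜 → 𝕜) (z : 𝕜) :
    wronskian (fun j w => a j * g j w) z = (∏ j, a j) * wronskian g z := by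
  simp only [wronskian, iteratedDeriv_const_mul_field]
  exact Matrix.det_mul_row a _

theorem wronskian_of_eq_one (g : Fin (n + 1) → 𝕜 → 𝕜) (hg : g 0 = 1) (z : 𝕜) :
    wronskian g z = wronskian (fun j => deriv (g j.succ)) z := by
  rw [wronskian, Matrix.det_succ_column_zero, Finset.sum_eq_single 0]
  · simp [Matrix.submatrix, iteratedDeriv_succ', hg, wronskian]
  · intro i _ hi
    simp [hg, Pi.one_def, iteratedDeriv_const, hi]
  · simp

theorem continuousAt_wronskian [CompleteSpace 𝕜] (hg : ∀ j, AnalyticAt 𝕜 (g j) z) :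
    ContinuousAt (wronskian g) z := by
  refine (continuous_id.matrix_det).continuousAt.comp
    (continuousAt_pi.2 fun i => continuousAt_pi.2 fun j => ?_)
  simpa [iteratedDeriv_eq_iterate] using ((hg j).iterated_deriv i).continuousAt

theorem wronskian_mul_left {f : 𝕜 → 𝕜} (hf : ContDiffAt 𝕜 n f z)
    (hg : ∀ j, ContDiffAt 𝕜 n (g j) z) :
    wronskian (fun j w => f w * g j w) z = f z ^ n * wronskian g z := by
  have hfactor : (Matrix.of fun i j : Fin n => iteratedDeriv i (fun w => f w * g j w) z) =
      (Matrix.of fun i k : Fin n => ((i : ℕ).choose k : 𝕜) * iteratedDeriv (i - k) f z) *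
        Matrix.of fun k j : Fin n => iteratedDeriv k (g j) z := by
    ext i j
    have hle : ((i : ℕ) : WithTop ℕ∞) ≤ n := by exact_mod_cast i.isLt.le
    simp_rw [Matrix.of_apply, mul_comm (f _), Matrix.mul_apply, Matrix.of_apply,
      iteratedDeriv_fun_mul ((hg j).of_le hle) (hf.of_le hle),
      Fin.sum_univ_eq_sum_range (fun k => ((i : ℕ).choose k : 𝕜) * iteratedDeriv (i - k) f z *
        iteratedDeriv k (g j) z)]
    refine Finset.sum_subset (range_subset_range.2 i.isLt) (fun k _ hk => ?_) |>.trans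
      (Finset.sum_congr rfl fun k _ => by ring)
    simp [Nat.choose_eq_zero_of_lt (not_lt.1 (mem_range.not.1 hk))]
  rw [wronskian, hfactor, Matrix.det_mul, Matrix.det_of_isLowerTriangular]
  · simp [wronskian]
  · intro i k hik
    simp [Nat.choose_eq_zero_of_lt (show (i : ℕ) < k from hik)]

theorem wronskian_pow [CompleteSpace 𝕜] {u : 𝕜 → 𝕜} (hu : AnalyticAt 𝕜 u z) (m : ℕ) :
    wronskian (fun j : Fin (m + 1) => fun w => u w ^ (j : ℕ)) z =
      (∏ k ∈ Icc 1 m, (k ! : 𝕜)) * deriv u z ^ (m * (m + 1) / 2) := by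
  induction m with
  | zero => simp [wronskian]
  | succ m ih =>
    have hderiv : ∀ j : Fin (m + 1), deriv (fun w => u w ^ (j.succ : ℕ)) =ᶠ[𝓝 z]
        fun w => ((j : 𝕜) + 1) * (deriv u w * u w ^ (j : ℕ)) := fun j => by
      filter_upwards [hu.eventually_analyticAt] with w hw
      rw [deriv_fun_pow hw.differentiableAt, Fin.val_succ, Nat.add_sub_cancel]
      push_cast
      ring
    have hfact : ∏ j : Fin (m + 1), ((j : 𝕜) + 1) = ((m + 1)! : 𝕜) := by
      rw [Fin.prod_univ_eq_prod_range (fun j => (j : 𝕜) + 1), ← prod_range_add_one_eq_factorial]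
      push_cast
      rfl
    rw [wronskian_of_eq_one _ (by ext; simp), wronskian_congr_nhds hderiv, wronskian_const_mul,
      wronskian_mul_left (g := fun j w => u w ^ (j : ℕ)) hu.deriv.contDiffAt
        fun j => (hu.fun_pow _).contDiffAt, ih, hfact,
      prod_Icc_succ_top (by omega), succ_mul_succ_add_one_div_two, pow_add]
    ring

variable {f₁ f₂ : 𝕜 → 𝕜}

theorem wronskian_pow_mul_pow_of_eventuallyEq_zero (h₁ : f₁ =ᶠ[𝓝 z] 0) (m : ℕ) :
    wronskian (fun j : Fin (m + 1) => fun w => f₁ w ^ (m - j) * f₂ w ^ (j : ℕ)) z =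
      (∏ k ∈ Icc 1 m, (k ! : 𝕜)) * (f₁ z * deriv f₂ z - f₂ z * deriv f₁ z) ^ (m * (m + 1) / 2) := by
  cases m with
  | zero => simp [wronskian]
  | succ m =>
    have hcol : (fun w => f₁ w ^ (m + 1 - (0 : Fin (m + 2))) * f₂ w ^ ((0 : Fin (m + 2)) : ℕ))
        =ᶠ[𝓝 z] 0 := by
      filter_upwards [h₁] with w hw
      simp [hw]
    have hexp : (m + 1) * (m + 1 + 1) / 2 ≠ 0 := by
      rw [succ_mul_succ_add_one_div_two]; omega
    rw [wronskian_eq_zero_of_eventuallyEq_zero 0 hcol, h₁.eq_of_nhds, h₁.deriv_eq]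
    simp [hexp]

variable [CompleteSpace 𝕜]

theorem wronskian_pow_mul_pow_of_ne_zero (h₁ : AnalyticAt 𝕜 f₁ z) (h₂ : AnalyticAt 𝕜 f₂ z)
    (hne : f₁ z ≠ 0) (m : ℕ) :
    wronskian (fun j : Fin (m + 1) => fun w => f₁ w ^ (m - j) * f₂ w ^ (j : ℕ)) z =
      (∏ k ∈ Icc 1 m, (k ! : 𝕜)) * (f₁ z * deriv f₂ z - f₂ z * deriv f₁ z) ^ (m * (m + 1) / 2) := by
  set u := fun w => f₂ w / f₁ w
  have hu : AnalyticAt 𝕜 u z := h₂.div h₁ hne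
  have hcol : ∀ j : Fin (m + 1), (fun w => f₁ w ^ (m - j) * f₂ w ^ (j : ℕ)) =ᶠ[𝓝 z]
      fun w => f₁ w ^ m * u w ^ (j : ℕ) := fun j => by
    filter_upwards [h₁.continuousAt.eventually_ne hne] with w hw
    have hsplit : f₁ w ^ m = f₁ w ^ (m - j) * f₁ w ^ (j : ℕ) := by
      rw [← pow_add, Nat.sub_add_cancel (Nat.le_of_lt_succ j.isLt)]
    rw [div_pow, hsplit]
    field_simp
  have hderiv : f₁ z ^ 2 * deriv u z = f₁ z * deriv f₂ z - f₂ z * deriv f₁ z := by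
    rw [deriv_fun_div h₂.differentiableAt h₁.differentiableAt hne]
    field_simp
  have hexp : (f₁ z ^ m) ^ (m + 1) = (f₁ z ^ 2) ^ (m * (m + 1) / 2) := by
    rw [← pow_mul, ← pow_mul, Nat.two_mul_div_two_of_even (Nat.even_mul_succ_self m)]
  rw [wronskian_congr_nhds hcol, wronskian_mul_left (g := fun j w => u w ^ (j : ℕ))
    (h₁.fun_pow m).contDiffAt fun j => (hu.fun_pow _).contDiffAt,
    wronskian_pow hu, ← hderiv, hexp, mul_pow]
  ring

theorem wronskian_pow_mul_pow (h₁ : AnalyticAt 𝕜 f₁ z) (h₂ : AnalyticAt 𝕜 f₂ z) (m : ℕ) :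
    wronskian (fun j : Fin (m + 1) => fun w => f₁ w ^ (m - j) * f₂ w ^ (j : ℕ)) z =
      (∏ k ∈ Icc 1 m, (k ! : 𝕜)) * (f₁ z * deriv f₂ z - f₂ z * deriv f₁ z) ^ (m * (m + 1) / 2) := by
  rcases h₁.eventually_eq_zero_or_eventually_ne_zero with hzero | hne
  · exact wronskian_pow_mul_pow_of_eventuallyEq_zero hzero m
  refine (ContinuousAt.eventuallyEq_nhds_iff_eventuallyEq_nhdsNE
    (f := wronskian _) (g := fun w => _ * (f₁ w * deriv f₂ w - f₂ w * deriv f₁ w) ^ _)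
    (continuousAt_wronskian fun j => (h₁.pow _).mul (h₂.pow _)) ?_).1 ?_ |>.eq_of_nhds
  · exact continuousAt_const.mul (((h₁.continuousAt.mul h₂.deriv.continuousAt).sub
      (h₂.continuousAt.mul h₁.deriv.continuousAt)).pow _)
  · filter_upwards [hne, nhdsWithin_le_nhds (h₁.eventually_analyticAt.and h₂.eventually_analyticAt)]
      with w hw ⟨hw₁, hw₂⟩
    exact wronskian_pow_mul_pow_of_ne_zero hw₁ hw₂ hw m

end Wronskian

theorem iterate_Dop (c : ℂ) (f : ℂ → ℂ) (n : ℕ) :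
    (Dop c)^[n] f = fun z => c ^ n * iteratedDeriv n f z := by
  induction n with
  | zero => simp
  | succ n ih =>
    ext z
    rw [Function.iterate_succ_apply', ih, Dop, deriv_const_mul_field, iteratedDeriv_succ, pow_succ]
    ring

theorem det_iterate_Dop {n : ℕ} (c : ℂ) (g : Fin n → ℂ → ℂ) (z : ℂ) :
    (Matrix.of fun i j : Fin n => (Dop c)^[i] (g j) z).det =
      (∏ i : Fin n, c ^ (i : ℕ)) * wronskian g z := by
  simp only [iterate_Dop]
  exact Matrix.det_mul_column _ _

theorem stmt_3_general (Ω : Set ℂ) (hΩo : IsOpen Ω) (c : ℂ)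
    (f₁ f₂ : ℂ → ℂ) (hf₁ : DifferentiableOn ℂ f₁ Ω) (hf₂ : DifferentiableOn ℂ f₂ Ω)
    (m : ℕ) (z : ℂ) (hz : z ∈ Ω) :
    Matrix.det (Matrix.of fun i j : Fin (m + 1) =>
        ((Dop c)^[(i : ℕ)] (fun w => f₁ w ^ (m - (j : ℕ)) * f₂ w ^ (j : ℕ))) z)
      = (∏ k ∈ Finset.Icc 1 m, (Nat.factorial k : ℂ)) *
        (f₁ z * Dop c f₂ z - f₂ z * Dop c f₁ z) ^ (m * (m + 1) / 2) := by
  have hΩ : Ω ∈ 𝓝 z := hΩo.mem_nhds hz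
  rw [det_iterate_Dop, prod_fin_pow_val,
    wronskian_pow_mul_pow (hf₁.analyticAt hΩ) (hf₂.analyticAt hΩ)]
  have hDop : f₁ z * Dop c f₂ z - f₂ z * Dop c f₁ z =
      c * (f₁ z * deriv f₂ z - f₂ z * deriv f₁ z) := by
    simp only [Dop]
    ring
  rw [hDop, mul_pow]
  ring

/-- For holomorphic `f₁, f₂` on an open set `Ω ⊆ ℂ` and `D = c·d/dz`,
the Wronskian of `f₁^m, f₁^{m-1}f₂, …, f₂^m` (with respect to `D`) equals
`(∏_{k=1}^m k!) · (f₁·Df₂ − f₂·Df₁)^{m(m+1)/2}` identically on `Ω`. -/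
theorem stmt_3 (Ω : Set ℂ) (hΩo : IsOpen Ω) (c : ℂ)
    (f₁ f₂ : ℂ → ℂ) (hf₁ : DifferentiableOn ℂ f₁ Ω) (hf₂ : DifferentiableOn ℂ f₂ Ω)
    (m : ℕ) (hm : 0 < m) (z : ℂ) (hz : z ∈ Ω) :
    Matrix.det (Matrix.of fun i j : Fin (m + 1) =>
        ((Dop c)^[(i : ℕ)] (fun w => f₁ w ^ (m - (j : ℕ)) * f₂ w ^ (j : ℕ))) z)
      = (∏ k ∈ Finset.Icc 1 m, (Nat.factorial k : ℂ)) *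
        (f₁ z * Dop c f₂ z - f₂ z * Dop c f₁ z) ^ (m * (m + 1) / 2) :=
  stmt_3_general Ω hΩo c f₁ f₂ hf₁ hf₂ m z hz
end

section
/- As formal power series in q with integer coefficients: (a) G(q)·∏_{n≥1}(1−qⁿ) = ∑_{n∈ℤ} (−1)ⁿ q^{(5n²+3n)/2}, and (b) H(q)·∏_{n≥1}(1−qⁿ) = ∑_{n∈ℤ} (−1)ⁿ q^{(5n²+n)/2}. (Equivalently, ch₁ = q^{9/40}(∑_{n∈ℤ}(−1)ⁿq^{(5n²+3n)/2})/η and ch₂ = q^{1/40}(∑_{n∈ℤ}(−1)ⁿq^{(5n²+n)/2})/η.) -/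
/-!
Cancelling the factors of `G` (resp. `H`) against `∏ (1 - qⁿ)` leaves
`∏_{j≥0} (1 - q^{5j+5-a}) (1 - q^{5j+a}) (1 - q^{5j+5})` with `a = 4` (resp. `a = 3`), which is
Jacobi's triple product at `x = qᵃ`, `p = q⁵`.

The triple product is proved in truncated form. Gauss's `q`-binomial theorem applied to
`∏_{j<2N} (1 - x p^{j-N})` gives
`∏_{j<N} (1 - x⁻¹p^{j+1}) (1 - x p^j) = ∑_{|n|≤N} (-1)ⁿ xⁿ p^{n(n-1)/2} [2N, N+n]_p`.
After multiplying by `(p; p)_N`, the `n`-th summand carries `(p; p)_N [2N, N+n]_p`, which is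
`≡ 1 mod p^{N+1-|n|}` since `(p; p)_m ≡ (p; p)_{K-1} mod p^K` for every `m ≥ K - 1`. As the
exponent of `xⁿ p^{n(n-1)/2}` is at least `|n|`, the finite product agrees with the partial
theta sum below `q^{N+1}`; and below `q^N` the coefficients of `G·P` only involve the first `N`
factors of `G` and the first `5N` of `P`.
-/

namespace RogersRamanujanTheta

open Finset

lemma prod_range_mul_eq_prod_prod {M : Type*} [CommMonoid M] (g : ℕ → M) (b N : ℕ) :
    ∏ m ∈ range (b * N), g m = ∏ n ∈ range N, ∏ r ∈ range b, g (b * n + r) := by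
  induction N with
  | zero => simp
  | succ N ih => rw [mul_add_one, prod_range_add, ih, prod_range_succ]

lemma inverse_mul_inverse_mul_eq {A : Type*} [CommRing A] {u v w w' : A} (hu : IsUnit u)
    (hv : IsUnit v) (h : w' = u * v * w) : Ring.inverse u * Ring.inverse v * w' = w := by
  rw [h]
  linear_combination (v * w * Ring.inverse v) * Ring.inverse_mul_cancel u hu +
    w * Ring.inverse_mul_cancel v hv

section Congruence

variable {A : Type*} [CommRing A]

lemma smodEq_span_singleton_iff {x y z : A} : x ≡ y [SMOD Ideal.span {z}] ↔ z ∣ x - y := by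
  rw [SModEq.sub_mem, Ideal.mem_span_singleton]

lemma one_sub_pow_smodEq_one (x : A) {K m : ℕ} (h : K ≤ m) :
    1 - x ^ m ≡ 1 [SMOD Ideal.span {x ^ K}] := by
  rw [smodEq_span_singleton_iff, sub_sub_cancel_left]
  exact (pow_dvd_pow x h).neg_right

lemma prod_range_smodEq_of_smodEq_one {I : Ideal A} {f : ℕ → A} {M M' : ℕ} (h : M ≤ M')
    (hf : ∀ n ∈ Ico M M', f n ≡ 1 [SMOD I]) :
    ∏ n ∈ range M', f n ≡ ∏ n ∈ range M, f n [SMOD I] := by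
  rw [← prod_range_mul_prod_Ico f h]
  simpa using SModEq.rfl.mul (SModEq.prod hf)

lemma smodEq_map {B : Type*} [CommRing B] (φ : A →+* B) {x y z : A}
    (h : x ≡ y [SMOD Ideal.span {z}]) : φ x ≡ φ y [SMOD Ideal.span {φ z}] := by
  rw [smodEq_span_singleton_iff] at h ⊢
  simpa using map_dvd φ h

lemma inverse_smodEq_one {I : Ideal A} {u : A} (hu : IsUnit u) (h : u ≡ 1 [SMOD I]) :
    Ring.inverse u ≡ 1 [SMOD I] := by
  simpa [Ring.inverse_mul_cancel u hu] using (SModEq.rfl (x := Ring.inverse u)).mul h.symm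

end Congruence

section GaussianBinomial

open Polynomial

noncomputable def gaussBinomial : ℕ → ℕ → ℤ[X]
  | _, 0 => 1
  | 0, _ + 1 => 0
  | M + 1, k + 1 => X ^ (k + 1) * gaussBinomial M (k + 1) + gaussBinomial M k

@[simp] lemma gaussBinomial_zero_right (M : ℕ) : gaussBinomial M 0 = 1 := by cases M <;> rfl

lemma gaussBinomial_succ_succ (M k : ℕ) :
    gaussBinomial (M + 1) (k + 1) = X ^ (k + 1) * gaussBinomial M (k + 1) + gaussBinomial M k :=
  rfl

lemma gaussBinomial_eq_zero_of_lt : ∀ {M k : ℕ}, M < k → gaussBinomial M k = 0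
  | 0, _ + 1, _ => rfl
  | M + 1, k + 1, h => by
    rw [gaussBinomial_succ_succ, gaussBinomial_eq_zero_of_lt (by omega),
      gaussBinomial_eq_zero_of_lt (show M < k by omega), mul_zero, add_zero]

@[simp] lemma gaussBinomial_self : ∀ M : ℕ, gaussBinomial M M = 1
  | 0 => rfl
  | M + 1 => by
    rw [gaussBinomial_succ_succ, gaussBinomial_eq_zero_of_lt M.lt_succ_self, gaussBinomial_self M,
      mul_zero, zero_add]

noncomputable def qPochhammer (m : ℕ) : ℤ[X] := ∏ j ∈ range m, (1 - X ^ (j + 1))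

lemma qPochhammer_succ (m : ℕ) : qPochhammer (m + 1) = qPochhammer m * (1 - X ^ (m + 1)) :=
  prod_range_succ _ _

lemma qPochhammer_mul_qPochhammer_mul_gaussBinomial (k l : ℕ) :
    qPochhammer k * qPochhammer l * gaussBinomial (k + l) k = qPochhammer (k + l) := by
  induction k generalizing l with
  | zero => simp [qPochhammer]
  | succ k ihk =>
    induction l with
    | zero => simp [qPochhammer]
    | succ l ihl =>
      have hk := ihk (l + 1)
      rw [show k + (l + 1) = k + l + 1 by ring] at hk
      rw [show k + 1 + l = k + l + 1 by ring] at ihl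
      rw [show k + 1 + (l + 1) = k + l + 1 + 1 by ring, gaussBinomial_succ_succ,
        qPochhammer_succ (k + l + 1)]
      linear_combination (X ^ (k + 1) * (1 - X ^ (l + 1))) * ihl + (1 - X ^ (k + 1)) * hk +
        (X ^ (k + 1) * qPochhammer (k + 1) * gaussBinomial (k + l + 1) (k + 1)) *
          qPochhammer_succ l +
        (qPochhammer (l + 1) * gaussBinomial (k + l + 1) k) * qPochhammer_succ k

/-- Gauss's `q`-binomial theorem. -/
theorem prod_one_add_mul_pow {R : Type*} [CommRing R] (p z : R) (M : ℕ) :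
    ∏ j ∈ range M, (1 + z * p ^ j) =
      ∑ k ∈ range (M + 1), p ^ k.choose 2 * z ^ k * aeval p (gaussBinomial M k) := by
  induction M generalizing z with
  | zero => simp
  | succ M ih =>
    set f : ℕ → R := fun k ↦ p ^ k.choose 2 * (z * p) ^ k * aeval p (gaussBinomial M k)
    have hpascal : ∀ k, p ^ (k + 1).choose 2 * z ^ (k + 1) *
        aeval p (gaussBinomial (M + 1) (k + 1)) = f (k + 1) + z * f k := by
      intro k
      simp only [f, gaussBinomial_succ_succ, Nat.choose_succ_succ', Nat.choose_one_right, map_add,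
        map_mul, map_pow, aeval_X]
      ring
    have hshift : ∑ k ∈ range (M + 1), f (k + 1) = ∑ k ∈ range (M + 1), f k - 1 := by
      have hlast : f (M + 1) = 0 := by simp [f, gaussBinomial_eq_zero_of_lt M.lt_succ_self]
      have h := sum_range_succ' f (M + 1)
      rw [sum_range_succ, hlast, add_zero] at h
      simp [h, f]
    calc ∏ j ∈ range (M + 1), (1 + z * p ^ j)
        = (1 + z) * ∑ k ∈ range (M + 1), f k := by
          rw [prod_range_succ', ← ih (z * p), pow_zero, mul_one, mul_comm]
          exact congrArg _ (prod_congr rfl fun j _ ↦ by ring)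
      _ = ∑ k ∈ range (M + 2), p ^ k.choose 2 * z ^ k * aeval p (gaussBinomial (M + 1) k) := by
          rw [sum_range_succ' _ (M + 1), sum_congr rfl fun k _ ↦ hpascal k, sum_add_distrib,
            ← mul_sum, hshift]
          simp only [Nat.choose_zero_succ, pow_zero, mul_one, gaussBinomial_zero_right, map_one]
          ring

lemma qPochhammer_smodEq {K M m : ℕ} (hK : K ≤ M + 1) (hm : M ≤ m) :
    qPochhammer m ≡ qPochhammer M [SMOD Ideal.span {X ^ K}] :=
  prod_range_smodEq_of_smodEq_one hm fun j hj ↦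
    one_sub_pow_smodEq_one X (by simp only [mem_Ico] at hj; omega)

lemma not_X_dvd_qPochhammer (m : ℕ) : ¬X ∣ qPochhammer m := by
  simp [X_dvd_iff, coeff_zero_eq_eval_zero, qPochhammer, eval_prod]

/-- `(q; q)_N [k+l, k] = (q; q)_N (q; q)_{k+l} / ((q; q)_k (q; q)_l)`, and each of the four
`q`-Pochhammer symbols is `≡ (q; q)_{K-1}` modulo `q^K`. -/
lemma qPochhammer_mul_gaussBinomial_smodEq_one {K N k l : ℕ} (hN : K ≤ N + 1) (hk : K ≤ k + 1)
    (hl : K ≤ l + 1) : qPochhammer N * gaussBinomial (k + l) k ≡ 1 [SMOD Ideal.span {X ^ K}] := by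
  have hQ : ∀ m, K ≤ m + 1 → qPochhammer m ≡ qPochhammer (K - 1) [SMOD Ideal.span {X ^ K}] :=
    fun m hm ↦ qPochhammer_smodEq (by omega) (by omega)
  have h : (qPochhammer N * gaussBinomial (k + l) k - 1) * (qPochhammer k * qPochhammer l) =
      qPochhammer N * qPochhammer (k + l) - qPochhammer k * qPochhammer l := by
    rw [← qPochhammer_mul_qPochhammer_mul_gaussBinomial k l]
    ring
  have hdiff := ((hQ N hN).mul (hQ (k + l) (by omega))).sub ((hQ k hk).mul (hQ l hl))
  rw [sub_self, ← h, SModEq.zero, Ideal.mem_span_singleton] at hdiff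
  rw [smodEq_span_singleton_iff]
  refine prime_X.pow_dvd_of_dvd_mul_right K (fun hX ↦ ?_) hdiff
  exact (prime_X.dvd_or_dvd hX).elim (not_X_dvd_qPochhammer k) (not_X_dvd_qPochhammer l)

end GaussianBinomial

section FiniteTripleProduct

open Polynomial LaurentPolynomial

/-- The exponent of `xⁿ p^{n(n-1)/2}` at `x = qᵃ`, `p = qᵉ`; the division is exact. -/
def thetaExponent (a e n : ℤ) : ℤ := a * n + e * (n * (n - 1) / 2)

lemma two_mul_thetaExponent (a e n : ℤ) :
    2 * thetaExponent a e n = e * n ^ 2 + (2 * a - e) * n := by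
  have h : 2 * (n * (n - 1) / 2) = n * (n - 1) :=
    Int.two_mul_ediv_two_of_even (Int.even_mul_pred_self n)
  rw [thetaExponent]
  linear_combination e * h

lemma two_mul_choose_two (n : ℕ) : 2 * (n.choose 2 : ℤ) = n * (n - 1) := by
  induction n with
  | zero => simp
  | succ n ih =>
    rw [Nat.choose_succ_succ', Nat.choose_one_right]
    push_cast
    linear_combination ih

lemma thetaExponent_natCast_sub (a e : ℤ) (k N : ℕ) :
    thetaExponent a e (k - N) =
      e * ((N + 1).choose 2 : ℕ) - N * a + (e * k.choose 2 + k * (a - e * N)) := by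
  have hk := two_mul_choose_two k
  have hN := two_mul_choose_two (N + 1)
  push_cast at hN
  refine mul_left_cancel₀ (two_ne_zero (α := ℤ)) ?_
  linear_combination two_mul_thetaExponent a e (k - N) - e * hk - e * hN

lemma sum_range_natCast_add_one (N : ℕ) :
    ∑ j ∈ range N, ((j : ℤ) + 1) = ((N + 1).choose 2 : ℕ) := by
  induction N with
  | zero => simp
  | succ N ih =>
    rw [sum_range_succ, ih, Nat.choose_succ_succ' (N + 1), Nat.choose_one_right]
    push_cast
    ring

lemma T_sum {ι : Type*} (s : Finset ι) (g : ι → ℤ) :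
    (T (∑ i ∈ s, g i) : ℤ[T;T⁻¹]) = ∏ i ∈ s, T (g i) := by
  classical
  induction s using Finset.induction_on with
  | empty => simp [T_zero]
  | insert i s hi ih => rw [sum_insert hi, prod_insert hi, T_add, ih]

lemma one_sub_T_eq_neg_T_mul (s : ℤ) : (1 - T s : ℤ[T;T⁻¹]) = -T s * (1 - T (-s)) := by
  rw [neg_mul, mul_sub, mul_one, ← T_add, add_neg_cancel, T_zero]
  ring

/-- Pulling `-T (a - e (j + 1))` out of the factors with negative shift. -/
lemma prod_range_two_mul_one_sub_T (a e : ℤ) (N : ℕ) :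
    ∏ j ∈ range (2 * N), (1 - T (a - e * N + e * j) : ℤ[T;T⁻¹]) =
      (-1) ^ N * T (N * a - e * ((N + 1).choose 2 : ℕ)) *
        ((∏ j ∈ range N, (1 - T (e * (j + 1) - a))) * ∏ j ∈ range N, (1 - T (e * j + a))) := by
  have hlow : ∀ j ∈ range N, (1 - T (a - e * N + e * (N - 1 - j : ℕ)) : ℤ[T;T⁻¹]) =
      -T (a - e * (j + 1)) * (1 - T (e * (j + 1) - a)) := by
    intro j hj
    have hjN : j < N := mem_range.mp hj
    have hexp : a - e * N + e * (N - 1 - j : ℕ) = a - e * (j + 1) := by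
      push_cast [Nat.cast_sub (show j ≤ N - 1 by omega), Nat.cast_sub (show 1 ≤ N by omega)]
      ring
    rw [hexp, one_sub_T_eq_neg_T_mul, neg_sub]
  have hhigh : ∀ j ∈ range N, (1 - T (a - e * N + e * (N + j : ℕ)) : ℤ[T;T⁻¹]) =
      1 - T (e * j + a) := by
    intro j _
    push_cast
    ring_nf
  have hsum : ∑ j ∈ range N, (a - e * (j + 1)) = N * a - e * ((N + 1).choose 2 : ℕ) := by
    simp only [sum_sub_distrib, sum_const, card_range, nsmul_eq_mul, ← mul_sum,
      sum_range_natCast_add_one]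
  rw [show range (2 * N) = range (N + N) by rw [two_mul], prod_range_add, ← prod_range_reflect,
    prod_congr rfl hlow, prod_congr rfl hhigh, prod_mul_distrib, prod_neg, ← T_sum, card_range,
    hsum, mul_assoc]

/-- The finite Jacobi triple product at `x = T a`, `p = T e`: Gauss's theorem at `M = 2N`,
`z = -x p^{-N}`. -/
lemma prod_one_sub_T_mul_prod_one_sub_T (a e : ℤ) (N : ℕ) :
    (∏ j ∈ range N, (1 - T (e * (j + 1) - a) : ℤ[T;T⁻¹])) * ∏ j ∈ range N, (1 - T (e * j + a)) =
      ∑ k ∈ range (2 * N + 1), (-1 : ℤ[T;T⁻¹]) ^ (k + N) * T (thetaExponent a e (k - N)) *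
        aeval (T e) (gaussBinomial (2 * N) k) := by
  have hfactor : ∀ j ∈ range (2 * N), (1 + -T (a - e * N) * T e ^ j : ℤ[T;T⁻¹]) =
      1 - T (a - e * N + e * j) := by
    intro j _
    rw [T_pow, neg_mul, ← T_add, mul_comm (j : ℤ), ← sub_eq_add_neg]
  have hterm : ∀ k ∈ range (2 * N + 1), (T e ^ k.choose 2 * (-T (a - e * N)) ^ k *
      aeval (T e) (gaussBinomial (2 * N) k) : ℤ[T;T⁻¹]) =
      (-1) ^ k * T (e * k.choose 2 + k * (a - e * N)) * aeval (T e) (gaussBinomial (2 * N) k) := by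
    intro k _
    rw [neg_pow, T_pow, T_pow, T_add, mul_comm ((k.choose 2 : ℕ) : ℤ) e]
    ring
  have hgauss := (prod_one_add_mul_pow (T e : ℤ[T;T⁻¹]) (-T (a - e * N)) (2 * N)).trans
    (sum_congr rfl hterm)
  rw [prod_congr rfl hfactor, prod_range_two_mul_one_sub_T] at hgauss
  have hunit : ((-1) ^ N * T (e * ((N + 1).choose 2 : ℕ) - N * a) : ℤ[T;T⁻¹]) *
      ((-1) ^ N * T (N * a - e * ((N + 1).choose 2 : ℕ))) = 1 := by
    rw [mul_mul_mul_comm, ← pow_add, ← T_add, Even.neg_one_pow ⟨N, rfl⟩, one_mul, ← T_zero]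
    ring_nf
  have key := congrArg (((-1) ^ N * T (e * ((N + 1).choose 2 : ℕ) - N * a) : ℤ[T;T⁻¹]) * ·) hgauss
  simp only [← mul_assoc _ _ (_ * _), hunit, one_mul] at key
  rw [key, mul_sum]
  refine sum_congr rfl fun k _ ↦ ?_
  rw [thetaExponent_natCast_sub, T_add (e * ((N + 1).choose 2 : ℕ) - N * a), pow_add]
  ring

lemma toLaurent_expand {R : Type*} [CommSemiring R] (e : ℕ) (f : R[X]) :
    toLaurent (expand R e f) = aeval (T e : R[T;T⁻¹]) f := by
  have h : (toLaurentAlg.comp (expand R e) : R[X] →ₐ[R] R[T;T⁻¹]) = aeval (T e) :=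
    algHom_ext (by simp)
  exact DFunLike.congr_fun h f

lemma mul_self_sub_self_nonneg (n : ℤ) : 0 ≤ n * (n - 1) := by
  rcases le_or_gt n 0 with h | h <;> nlinarith

lemma thetaExponent_nonneg {a e : ℕ} (hae : a ≤ e) (n : ℤ) : 0 ≤ thetaExponent a e n := by
  have h := two_mul_thetaExponent a e n
  have hae' : (a : ℤ) ≤ e := by exact_mod_cast hae
  rcases le_or_gt 0 n with hn | hn
  · nlinarith [mul_nonneg (Int.natCast_nonneg e) (mul_self_sub_self_nonneg n),
      mul_nonneg (Int.natCast_nonneg a) hn]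
  · nlinarith [mul_nonneg (Int.natCast_nonneg e) (mul_self_sub_self_nonneg n),
      mul_nonneg (sub_nonneg.2 hae') (neg_nonneg.2 hn.le)]

theorem prod_one_sub_X_pow_mul_prod_one_sub_X_pow {a e : ℕ} (hae : a ≤ e) (N : ℕ) :
    (∏ j ∈ range N, (1 - X ^ (e * j + (e - a)) : ℤ[X])) * ∏ j ∈ range N, (1 - X ^ (e * j + a)) =
      ∑ n ∈ Icc (-N : ℤ) N, Polynomial.C (n.negOnePow : ℤ) * X ^ (thetaExponent a e n).toNat *
        expand ℤ e (gaussBinomial (2 * N) (n + N).toNat) := by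
  apply toLaurent_injective
  have hlow : ∀ j ∈ range N, toLaurent (1 - X ^ (e * j + (e - a)) : ℤ[X]) =
      1 - T (e * (j + 1) - a) := by
    intro j _
    rw [map_sub, map_one, toLaurent_X_pow]
    push_cast [Nat.cast_sub hae]
    ring_nf
  have hhigh : ∀ j ∈ range N, toLaurent (1 - X ^ (e * j + a) : ℤ[X]) = 1 - T (e * j + a) := by
    intro j _
    rw [map_sub, map_one, toLaurent_X_pow]
    push_cast
    rfl
  rw [map_mul, map_prod, map_prod, prod_congr rfl hlow, prod_congr rfl hhigh,
    prod_one_sub_T_mul_prod_one_sub_T, map_sum]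
  refine sum_nbij' (fun k ↦ (k : ℤ) - N) (fun n ↦ (n + N).toNat) ?_ ?_ ?_ ?_ ?_
  · intro k hk
    simp only [mem_range, mem_Icc] at hk ⊢
    omega
  · intro n hn
    simp only [mem_range, mem_Icc] at hn ⊢
    omega
  · intro k _
    omega
  · intro n hn
    simp only [mem_Icc] at hn
    omega
  · intro k _
    rw [map_mul, map_mul, toLaurent_C, toLaurent_X_pow, toLaurent_expand,
      Int.toNat_of_nonneg (thetaExponent_nonneg hae _), Int.negOnePow_sub, Units.val_mul, map_mul,
      Int.coe_negOnePow_natCast, Int.coe_negOnePow_natCast, pow_add]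
    simp

end FiniteTripleProduct

section Truncation

open Polynomial

noncomputable def partialTheta (a e N : ℕ) : ℤ[X] :=
  ∑ n ∈ Icc (-N : ℤ) N, C (n.negOnePow : ℤ) * X ^ (thetaExponent a e n).toNat

lemma abs_le_thetaExponent {a e : ℕ} (ha : 0 < a) (hae : a < e) (n : ℤ) :
    |n| ≤ thetaExponent a e n := by
  have h := two_mul_thetaExponent a e n
  have ha' : (1 : ℤ) ≤ a := by exact_mod_cast ha
  have hae' : (a : ℤ) + 1 ≤ e := by exact_mod_cast hae
  rcases le_or_gt 0 n with hn | hn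
  · rw [abs_of_nonneg hn]
    nlinarith [mul_nonneg (Int.natCast_nonneg e) (mul_self_sub_self_nonneg n),
      mul_nonneg (by omega : (0 : ℤ) ≤ a - 1) hn]
  · rw [abs_of_neg hn]
    nlinarith [mul_nonneg (Int.natCast_nonneg e) (mul_self_sub_self_nonneg (-n)),
      mul_nonneg (by omega : (0 : ℤ) ≤ e - a - 1) (neg_nonneg.2 hn.le)]

theorem prod_smodEq_partialTheta {a e : ℕ} (ha : 0 < a) (hae : a < e) (N : ℕ) :
    (∏ j ∈ range N, (1 - X ^ (e * j + (e - a))) * (1 - X ^ (e * j + a)) * (1 - X ^ (e * j + e)) :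
      ℤ[X]) ≡ partialTheta a e N [SMOD Ideal.span {X ^ (N + 1)}] := by
  have hpoch : ∏ j ∈ range N, (1 - X ^ (e * j + e) : ℤ[X]) = expand ℤ e (qPochhammer N) := by
    simp [qPochhammer, map_prod, ← pow_mul, mul_add]
  rw [prod_mul_distrib, prod_mul_distrib, prod_one_sub_X_pow_mul_prod_one_sub_X_pow hae.le, hpoch,
    sum_mul, partialTheta]
  refine SModEq.sum fun n hn ↦ ?_
  rw [mem_Icc] at hn
  obtain ⟨K, hK⟩ : ∃ K, K = N + 1 - n.natAbs := ⟨_, rfl⟩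
  have hQ : qPochhammer N * gaussBinomial (2 * N) (n + N).toNat ≡ 1 [SMOD Ideal.span {X ^ K}] := by
    rw [show 2 * N = (n + N).toNat + (N - n).toNat by omega]
    exact qPochhammer_mul_gaussBinomial_smodEq_one (by omega) (by omega) (by omega)
  rw [smodEq_span_singleton_iff] at hQ ⊢
  have hexp := map_dvd (expand ℤ e) hQ
  rw [map_sub, map_one, map_mul, map_pow, expand_X, ← pow_mul] at hexp
  have hle : N + 1 ≤ (thetaExponent a e n).toNat + e * K := by
    have habs := abs_le_thetaExponent ha hae n
    rw [Int.abs_eq_natAbs] at habs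
    have heK : K ≤ e * K := Nat.le_mul_of_pos_left K (by omega)
    omega
  refine (pow_dvd_pow X hle).trans ?_
  rw [pow_add, show ∀ c x y z : ℤ[X], c * x * y * z - c * x = c * x * (z * y - 1) by intros; ring]
  exact mul_dvd_mul (dvd_mul_left _ _) hexp

lemma coeff_partialTheta {a e : ℕ} (hae : a ≤ e) (N d : ℕ) :
    (partialTheta a e N).coeff d = ∑ n ∈ Icc (-N : ℤ) N,
      if e * n ^ 2 + (2 * a - e) * n = 2 * (d : ℤ) then (n.negOnePow : ℤ) else 0 := by
  rw [partialTheta, finsetSum_coeff]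
  refine sum_congr rfl fun n _ ↦ ?_
  rw [coeff_C_mul_X_pow]
  refine if_congr ?_ rfl rfl
  have h := two_mul_thetaExponent a e n
  have h0 := thetaExponent_nonneg hae n
  omega

end Truncation

section PowerSeries

open PowerSeries

variable {R : Type*} [CommRing R]

lemma coeff_eq_of_smodEq {f g : R⟦X⟧} {K d : ℕ} (h : f ≡ g [SMOD Ideal.span {X ^ K}])
    (hd : d < K) : coeff d f = coeff d g := by
  rw [smodEq_span_singleton_iff, X_pow_dvd_iff] at h
  simpa [sub_eq_zero] using h d hd

lemma isUnit_one_sub_X_pow {m : ℕ} (hm : m ≠ 0) : IsUnit (1 - X ^ m : R⟦X⟧) := by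
  simp [isUnit_iff_constantCoeff, hm]

lemma inverse_mul_inverse_smodEq_one {n m m' : ℕ} (hm : n < m) (hm' : n < m') :
    Ring.inverse (1 - X ^ m : R⟦X⟧) * Ring.inverse (1 - X ^ m') ≡ 1
      [SMOD Ideal.span {X ^ (n + 1)}] := by
  simpa using (inverse_smodEq_one (isUnit_one_sub_X_pow (R := R) (Nat.ne_zero_of_lt hm))
    (one_sub_pow_smodEq_one X hm)).mul
    (inverse_smodEq_one (isUnit_one_sub_X_pow (R := R) (Nat.ne_zero_of_lt hm'))
      (one_sub_pow_smodEq_one X hm'))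

lemma smodEq_prod_of_coeff_eq {F : R⟦X⟧} {f : ℕ → R⟦X⟧}
    (hf : ∀ n, f n ≡ 1 [SMOD Ideal.span {X ^ (n + 1)}])
    (hF : ∀ d, coeff d F = coeff d (∏ n ∈ range (d + 1), f n)) {M M' : ℕ} (h : M ≤ M') :
    F ≡ ∏ n ∈ range M', f n [SMOD Ideal.span {X ^ M}] := by
  rw [smodEq_span_singleton_iff, X_pow_dvd_iff]
  intro i hi
  rw [map_sub, hF, sub_eq_zero]
  refine coeff_eq_of_smodEq (prod_range_smodEq_of_smodEq_one (by omega) fun n hn ↦ ?_).symm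
    (lt_add_one i)
  rw [mem_Ico] at hn
  exact (hf n).mono (Ideal.span_singleton_le_span_singleton.2 (pow_dvd_pow X (by omega)))

theorem coeff_mul_eq_coeff_partialTheta {a e : ℕ} (ha : 0 < a) (hae : a < e) {F P : ℤ⟦X⟧}
    {f : ℕ → ℤ⟦X⟧} (hf : ∀ n, f n ≡ 1 [SMOD Ideal.span {X ^ (n + 1)}])
    (hF : ∀ d, coeff d F = coeff d (∏ n ∈ range (d + 1), f n))
    (hP : ∀ d, coeff d P = coeff d (∏ n ∈ range (d + 1), (1 - X ^ (n + 1))))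
    (hblock : ∀ n, f n * ∏ r ∈ range e, (1 - X ^ (e * n + r + 1)) =
      (1 - X ^ (e * n + (e - a))) * (1 - X ^ (e * n + a)) * (1 - X ^ (e * n + e)))
    (d : ℕ) : coeff d (F * P) = (partialTheta a e (d + 1)).coeff d := by
  have hone : ∀ n : ℕ, (1 - X ^ (n + 1) : ℤ⟦X⟧) ≡ 1 [SMOD Ideal.span {X ^ (n + 1)}] :=
    fun n ↦ one_sub_pow_smodEq_one X le_rfl
  have hPN := smodEq_prod_of_coeff_eq hone hP (Nat.le_mul_of_pos_left (d + 1) (by omega : 0 < e))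
  have hFP := (smodEq_prod_of_coeff_eq hf hF le_rfl).mul hPN
  let ι := Polynomial.coeToPowerSeries.ringHom (R := ℤ)
  have hprod : (∏ n ∈ range (d + 1), f n) * ∏ m ∈ range (e * (d + 1)), (1 - X ^ (m + 1)) =
      ι (∏ j ∈ range (d + 1), (1 - Polynomial.X ^ (e * j + (e - a))) *
        (1 - Polynomial.X ^ (e * j + a)) * (1 - Polynomial.X ^ (e * j + e))) := by
    rw [prod_range_mul_eq_prod_prod, ← prod_mul_distrib, prod_congr rfl fun n _ ↦ hblock n]
    simp [ι]
  have htheta := smodEq_map ι (prod_smodEq_partialTheta ha hae (d + 1))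
  rw [map_pow, Polynomial.coeToPowerSeries.ringHom_apply, Polynomial.coe_X] at htheta
  rw [coeff_eq_of_smodEq hFP (lt_add_one d), hprod, coeff_eq_of_smodEq htheta (by omega),
    Polynomial.coeToPowerSeries.ringHom_apply, Polynomial.coeff_coe]

end PowerSeries

end RogersRamanujanTheta

open PowerSeries Finset

/-- the Jacobi-triple-product evaluations
`G(q)·∏_{n≥1}(1−qⁿ) = ∑_{n∈ℤ} (−1)ⁿ q^{(5n²+3n)/2}` and
`H(q)·∏_{n≥1}(1−qⁿ) = ∑_{n∈ℤ} (−1)ⁿ q^{(5n²+n)/2}` in `ℤ⟦q⟧`.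
The infinite products are pinned down coefficientwise by finite partial products;
the bilateral theta sums are pinned down coefficientwise (all integer solutions `n`
of `5n²+3n = 2d`, resp. `5n²+n = 2d`, satisfy `|n| ≤ d+1`). -/
theorem stmt_7 (G H P S₁ S₂ : PowerSeries ℤ)
    (hG : ∀ d : ℕ, coeff d G = coeff d (∏ n ∈ range (d + 1),
      Ring.inverse (1 - (X : PowerSeries ℤ) ^ (5 * n + 2)) *
        Ring.inverse (1 - (X : PowerSeries ℤ) ^ (5 * n + 3))))
    (hH : ∀ d : ℕ, coeff d H = coeff d (∏ n ∈ range (d + 1),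
      Ring.inverse (1 - (X : PowerSeries ℤ) ^ (5 * n + 1)) *
        Ring.inverse (1 - (X : PowerSeries ℤ) ^ (5 * n + 4))))
    (hP : ∀ d : ℕ, coeff d P =
      coeff d (∏ n ∈ range (d + 1), (1 - (X : PowerSeries ℤ) ^ (n + 1))))
    (hS₁ : ∀ d : ℕ, coeff d S₁ = ∑ n ∈ Finset.Icc (-(d : ℤ) - 1) ((d : ℤ) + 1),
      if 5 * n ^ 2 + 3 * n = 2 * (d : ℤ) then (((-1 : ℤˣ) ^ n : ℤˣ) : ℤ) else 0)
    (hS₂ : ∀ d : ℕ, coeff d S₂ = ∑ n ∈ Finset.Icc (-(d : ℤ) - 1) ((d : ℤ) + 1),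
      if 5 * n ^ 2 + n = 2 * (d : ℤ) then (((-1 : ℤˣ) ^ n : ℤˣ) : ℤ) else 0) :
    G * P = S₁ ∧ H * P = S₂ := by
  open RogersRamanujanTheta in
  refine ⟨ext fun d ↦ ?_, ext fun d ↦ ?_⟩
  · rw [coeff_mul_eq_coeff_partialTheta (a := 4) (e := 5) (by norm_num) (by norm_num)
      (fun n ↦ inverse_mul_inverse_smodEq_one (by omega) (by omega)) hG hP
      (fun n ↦ inverse_mul_inverse_mul_eq (isUnit_one_sub_X_pow (by omega))
        (isUnit_one_sub_X_pow (by omega)) (by simp only [prod_range_succ, prod_range_zero]; ring)),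
      coeff_partialTheta (by norm_num), hS₁]
    exact sum_congr (by push_cast; ring_nf) fun n _ ↦ by norm_num [Int.negOnePow_def]
  · rw [coeff_mul_eq_coeff_partialTheta (a := 3) (e := 5) (by norm_num) (by norm_num)
      (fun n ↦ inverse_mul_inverse_smodEq_one (by omega) (by omega)) hH hP
      (fun n ↦ inverse_mul_inverse_mul_eq (isUnit_one_sub_X_pow (by omega))
        (isUnit_one_sub_X_pow (by omega)) (by simp only [prod_range_succ, prod_range_zero]; ring)),
      coeff_partialTheta (by norm_num), hS₂]
    exact sum_congr (by push_cast; ring_nf) fun n _ ↦ by norm_num [Int.negOnePow_def]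
end

section
/- Let Θ be the ℚ-linear derivation of the polynomial ring ℚ[X,Y] determined by Θ(X) = −(1/3)·Y and Θ(Y) = −(1/2)·X². Fix a positive integer m and set α = m/3, and for l ∈ ℕ define G_l = ∑_{r,s≥0, 2r+3s=l} (α(α−1)⋯(α−r−s+1)/(r!·s!))·(−3X)^r·(2Y)^s ∈ ℚ[X,Y] and Ḡ_l = (l!/6^l)·G_l. Then Ḡ₂ = −(m/18)·X, Ḡ₃ = (m/54)·Y, and for every integer l ≥ 4: Ḡ_l = Θ(Ḡ_{l−1}) + (l−1)(m−l+2)·(−X/18)·Ḡ_{l−2}. -/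
/-!
`G_l` is the coefficient of `t^l` in `(1 - 3X t² + 2Y t³)^α`; its coefficient of `X^a Y^b` is
the hypergeometric term `(α)_{a+b} (-3)^a 2^b / (a! b!)`, so neighbouring coefficients differ by
explicit rational factors. Clearing the normalisation `l!/6^l`, the claimed recursion becomes
`l G_l = 6 Θ G_{l-1} - 2 (3α - l + 2) X G_{l-2}`. Since `Θ = -(1/3) Y ∂_X - (1/2) X² ∂_Y`
shifts exponents by `(-1, +1)` and `(+2, -1)`, comparing coefficients of `X^a Y^b` reduces this
to an identity between rational functions of `α`, `a`, `b`, one for each boundary case of `(a, b)`.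
-/

open Finset MvPolynomial

local notation "ℚ[X,Y]" => MvPolynomial (Fin 2) ℚ

noncomputable def gCoeff (α : ℚ) (a b : ℕ) : ℚ :=
  (descPochhammer ℚ (a + b)).eval α / (a.factorial * b.factorial) * (-3) ^ a * 2 ^ b

noncomputable def gPoly (α : ℚ) (l : ℕ) : ℚ[X,Y] :=
  ∑ r ∈ range (l + 1), ∑ s ∈ range (l + 1),
    if 2 * r + 3 * s = l then
      C ((descPochhammer ℚ (r + s)).eval α / ((r.factorial : ℚ) * (s.factorial : ℚ))) *
        (C (-3 : ℚ) * X 0) ^ r * (C (2 : ℚ) * X 1) ^ s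
    else 0

lemma gCoeff_succ_left (α : ℚ) (a b : ℕ) :
    gCoeff α (a + 1) b = -3 * (α - (a + b)) / (a + 1) * gCoeff α a b := by
  rw [gCoeff, gCoeff, add_right_comm, descPochhammer_succ_eval, Nat.factorial_succ]
  push_cast
  field_simp
  ring

lemma gCoeff_succ_right (α : ℚ) (a b : ℕ) :
    gCoeff α a (b + 1) = 2 * (α - (a + b)) / (b + 1) * gCoeff α a b := by
  rw [gCoeff, gCoeff, ← add_assoc, descPochhammer_succ_eval, Nat.factorial_succ]
  push_cast
  field_simp
  ring

lemma gCoeff_recursion (α : ℚ) (a b : ℕ) :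
    (2 * a + 3 * b : ℚ) * gCoeff α a b =
      6 * (-(1 / 3) * (if b = 0 then 0 else (a + 1) * gCoeff α (a + 1) (b - 1)) +
        -(1 / 2) * (if a < 2 then 0 else (b + 1) * gCoeff α (a - 2) (b + 1))) -
      2 * (3 * α - (2 * a + 3 * b) + 2) * (if a = 0 then 0 else gCoeff α (a - 1) b) := by
  rcases a with _ | _ | a <;> rcases b with _ | b <;>
    simp [gCoeff_succ_left, gCoeff_succ_right] <;> field_simp <;> ring

lemma single_add_single_eq_iff (d : Fin 2 →₀ ℕ) (r s : ℕ) :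
    Finsupp.single 0 r + Finsupp.single 1 s = d ↔ r = d 0 ∧ s = d 1 := by
  constructor
  · rintro rfl
    simp
  · rintro ⟨rfl, rfl⟩
    ext i
    fin_cases i <;> simp

lemma coeff_gPoly (α : ℚ) (l : ℕ) (d : Fin 2 →₀ ℕ) :
    coeff d (gPoly α l) = if 2 * d 0 + 3 * d 1 = l then gCoeff α (d 0) (d 1) else 0 := by
  have hsummand (r s : ℕ) :
      C ((descPochhammer ℚ (r + s)).eval α / ((r.factorial : ℚ) * (s.factorial : ℚ))) *
        (C (-3 : ℚ) * X 0) ^ r * (C (2 : ℚ) * X 1) ^ s =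
      monomial (Finsupp.single (0 : Fin 2) r + Finsupp.single 1 s) (gCoeff α r s) := by
    simp only [gCoeff, mul_pow, ← map_pow, X_pow_eq_monomial, C_mul_monomial, monomial_mul]
    ring_nf
  simp only [gPoly, hsummand, coeff_sum, apply_ite (coeff d), coeff_monomial, coeff_zero,
    single_add_single_eq_iff, ← ite_and]
  rw [Finset.sum_eq_single (d 0)
      (fun r _ hr => Finset.sum_eq_zero fun s _ => if_neg (by tauto))
      (fun h => Finset.sum_eq_zero fun s _ => if_neg (by simp at h; omega)),
    Finset.sum_eq_single (d 1) (fun s _ hs => if_neg (by tauto))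
      (fun h => if_neg (by simp at h; omega))]
  simp

lemma theta_apply (Θ : Derivation ℚ ℚ[X,Y] ℚ[X,Y])
    (hΘX : Θ (X 0) = C (-(1 / 3) : ℚ) * X 1) (hΘY : Θ (X 1) = C (-(1 / 2) : ℚ) * X 0 ^ 2)
    (p : ℚ[X,Y]) :
    Θ p = C (-(1 / 3) : ℚ) * X 1 * pderiv 0 p + C (-(1 / 2) : ℚ) * X 0 ^ 2 * pderiv 1 p := by
  have : Θ = (C (-(1 / 3) : ℚ) * X 1 : ℚ[X,Y]) • pderiv 0 +
      (C (-(1 / 2) : ℚ) * X 0 ^ 2 : ℚ[X,Y]) • pderiv 1 := by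
    refine derivation_ext fun i => ?_
    fin_cases i <;> simp [hΘX, hΘY, pderiv_X]
  rw [this]
  rfl

lemma coeff_theta (Θ : Derivation ℚ ℚ[X,Y] ℚ[X,Y])
    (hΘX : Θ (X 0) = C (-(1 / 3) : ℚ) * X 1) (hΘY : Θ (X 1) = C (-(1 / 2) : ℚ) * X 0 ^ 2)
    (p : ℚ[X,Y]) (d : Fin 2 →₀ ℕ) :
    coeff d (Θ p) =
      -(1 / 3) * (if d 1 = 0 then 0 else (d 0 + 1) * coeff (d - .single 1 1 + .single 0 1) p) +
      -(1 / 2) * (if d 0 < 2 then 0 else (d 1 + 1) * coeff (d - .single 0 2 + .single 1 1) p) := by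
  rw [theta_apply Θ hΘX hΘY, X_pow_eq_monomial]
  simp only [coeff_add, mul_assoc, coeff_C_mul, coeff_X_mul', coeff_monomial_mul', coeff_pderiv,
    Finsupp.mem_support_iff, Finsupp.single_le_iff, ← not_lt, ite_not]
  simp [mul_comm]

theorem gPoly_recursion (Θ : Derivation ℚ ℚ[X,Y] ℚ[X,Y])
    (hΘX : Θ (X 0) = C (-(1 / 3) : ℚ) * X 1) (hΘY : Θ (X 1) = C (-(1 / 2) : ℚ) * X 0 ^ 2)
    (α : ℚ) {l : ℕ} (hl : 2 ≤ l) :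
    (l : ℚ) • gPoly α l =
      (6 : ℚ) • Θ (gPoly α (l - 1)) -
        (2 * (3 * α - l + 2)) • (X 0 * gPoly α (l - 2)) := by
  ext d
  simp only [coeff_smul, coeff_sub, smul_eq_mul, coeff_theta Θ hΘX hΘY, coeff_X_mul',
    coeff_gPoly, Finsupp.mem_support_iff, ite_not, Finsupp.coe_add, Finsupp.coe_tsub,
    Pi.add_apply, Pi.sub_apply, Finsupp.single_eq_same, Finsupp.single_eq_of_ne, ne_eq,
    zero_ne_one, one_ne_zero, not_false_eq_true, tsub_zero, add_zero]
  generalize d 0 = a, d 1 = b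
  by_cases h : 2 * a + 3 * b = l
  · subst h
    have key := gCoeff_recursion α a b
    split_ifs at key ⊢ <;> first | omega | (push_cast at key ⊢; linarith)
  · split_ifs <;> first | omega | simp

lemma gPoly_two (α : ℚ) : gPoly α 2 = C (-3 * α) * X 0 := by
  simp [gPoly, Finset.sum_range_succ]
  ring

lemma gPoly_three (α : ℚ) : gPoly α 3 = C (2 * α) * X 1 := by
  simp [gPoly, Finset.sum_range_succ]
  ring

theorem stmt_18_general
    (Θ : Derivation ℚ (MvPolynomial (Fin 2) ℚ) (MvPolynomial (Fin 2) ℚ))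
    (hΘX : Θ (X 0) = C (-(1 / 3) : ℚ) * X 1)
    (hΘY : Θ (X 1) = C (-(1 / 2) : ℚ) * X 0 ^ 2)
    (m : ℕ)
    (G : ℕ → MvPolynomial (Fin 2) ℚ)
    (hG : ∀ l : ℕ, G l = ∑ r ∈ range (l + 1), ∑ s ∈ range (l + 1),
      if 2 * r + 3 * s = l then
        C ((descPochhammer ℚ (r + s)).eval ((m : ℚ) / 3) /
            ((r.factorial : ℚ) * (s.factorial : ℚ))) *
          (C (-3 : ℚ) * X 0) ^ r * (C (2 : ℚ) * X 1) ^ s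
      else 0)
    (Gbar : ℕ → MvPolynomial (Fin 2) ℚ)
    (hGbar : ∀ l : ℕ, Gbar l = C ((l.factorial : ℚ) / 6 ^ l) * G l) :
    Gbar 2 = C (-(m : ℚ) / 18) * X 0 ∧
    Gbar 3 = C ((m : ℚ) / 54) * X 1 ∧
    ∀ l : ℕ, 4 ≤ l →
      Gbar l = Θ (Gbar (l - 1)) +
        C (((l : ℚ) - 1) * ((m : ℚ) - (l : ℚ) + 2)) * (C (-(1 / 18) : ℚ) * X 0) *
          Gbar (l - 2) := by
  obtain rfl : G = gPoly (m / 3) := funext hG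
  refine ⟨?_, ?_, fun l hl => ?_⟩
  · rw [hGbar, gPoly_two, ← mul_assoc, ← map_mul]
    congr 2
    norm_num [Nat.factorial]
    ring
  · rw [hGbar, gPoly_three, ← mul_assoc, ← map_mul]
    congr 2
    norm_num [Nat.factorial]
    ring
  · obtain ⟨k, rfl⟩ : ∃ k, l = k + 2 := ⟨l - 2, by omega⟩
    have hrec := gPoly_recursion Θ hΘX hΘY (m / 3) (l := k + 2) (by omega)
    simp only [hGbar, show k + 2 - 1 = k + 1 by omega, Nat.add_sub_cancel] at hrec ⊢
    simp only [← smul_eq_C_mul, Derivation.map_smul, smul_mul_assoc, mul_smul_comm,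
      smul_smul] at hrec ⊢
    push_cast [Nat.factorial_succ] at hrec ⊢
    linear_combination (norm := module) ((k + 1) * k.factorial / 6 ^ (k + 2) : ℚ) • hrec

/-- in `ℚ[X,Y]` (with `X = E₄`, `Y = E₆`) let `Θ` be the derivation
with `Θ(X) = −(1/3)Y`, `Θ(Y) = −(1/2)X²`, and for a positive integer `m`, `α = m/3`,
let `G_l = ∑_{2r+3s=l} (α(α−1)⋯(α−r−s+1)/(r!s!))·(−3X)^r·(2Y)^s` and
`Ḡ_l = (l!/6^l)·G_l`.  Then `Ḡ₂ = −(m/18)X`, `Ḡ₃ = (m/54)Y`, and for every `l ≥ 4`,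
`Ḡ_l = Θ(Ḡ_{l−1}) + (l−1)(m−l+2)·(−X/18)·Ḡ_{l−2}`. -/
theorem stmt_18
    (Θ : Derivation ℚ (MvPolynomial (Fin 2) ℚ) (MvPolynomial (Fin 2) ℚ))
    (hΘX : Θ (X 0) = C (-(1 / 3) : ℚ) * X 1)
    (hΘY : Θ (X 1) = C (-(1 / 2) : ℚ) * X 0 ^ 2)
    (m : ℕ) (hm : 0 < m)
    (G : ℕ → MvPolynomial (Fin 2) ℚ)
    (hG : ∀ l : ℕ, G l = ∑ r ∈ range (l + 1), ∑ s ∈ range (l + 1),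
      if 2 * r + 3 * s = l then
        C ((descPochhammer ℚ (r + s)).eval ((m : ℚ) / 3) /
            ((r.factorial : ℚ) * (s.factorial : ℚ))) *
          (C (-3 : ℚ) * X 0) ^ r * (C (2 : ℚ) * X 1) ^ s
      else 0)
    (Gbar : ℕ → MvPolynomial (Fin 2) ℚ)
    (hGbar : ∀ l : ℕ, Gbar l = C ((l.factorial : ℚ) / 6 ^ l) * G l) :
    Gbar 2 = C (-(m : ℚ) / 18) * X 0 ∧
    Gbar 3 = C ((m : ℚ) / 54) * X 1 ∧
    ∀ l : ℕ, 4 ≤ l →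
      Gbar l = Θ (Gbar (l - 1)) +
        C (((l : ℚ) - 1) * ((m : ℚ) - (l : ℚ) + 2)) * (C (-(1 / 18) : ℚ) * X 0) *
          Gbar (l - 2) :=
  stmt_18_general Θ hΘX hΘY m G hG Gbar hGbar
end
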